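/- arXiv:1305.6388 — 2 statements merged into one kernel-verified Lean document; each statement's English description precedes it below -/
import Mathlib

section
/- Let P be a finitely generated cancellative commutative monoid and Γ a row-finite P-graph with no sources (meaning 0 < |vΓ^p| < ∞ for all vertices v and all p ∈ P). Then for each vertex v there exists a degree-preserving functor x : Ω_P → Γ with x(0,0) = v. -/
/-- A `P`-graph structure on a set `V` of vertices (objects) and a set `E` of paths
(morphisms): a small category with range `r`, source `s`, identities `vert`,
a (partially meaningful) composition `comp`, together with a degree functor `d : E → P`
satisfying the unique factorisation property. -/
structure PGraphStr (P : Type) [AddCommMonoid P] (V : Type) (E : Type) where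
  r : E → V
  s : E → V
  d : E → P
  vert : V → E
  comp : E → E → E
  r_vert : ∀ v, r (vert v) = v
  s_vert : ∀ v, s (vert v) = v
  d_vert : ∀ v, d (vert v) = 0
  r_comp : ∀ μ ν, s μ = r ν → r (comp μ ν) = r μ
  s_comp : ∀ μ ν, s μ = r ν → s (comp μ ν) = s ν
  d_comp : ∀ μ ν, s μ = r ν → d (comp μ ν) = d μ + d ν
  comp_assoc : ∀ μ ν ξ, s μ = r ν → s ν = r ξ →
    comp (comp μ ν) ξ = comp μ (comp ν ξ)
  vert_comp : ∀ μ, comp (vert (r μ)) μ = μ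
  comp_vert : ∀ μ, comp μ (vert (s μ)) = μ
  factor : ∀ ξ p q, d ξ = p + q →
    ∃! ηζ : E × E, s ηζ.1 = r ηζ.2 ∧ d ηζ.1 = p ∧ d ηζ.2 = q ∧ comp ηζ.1 ηζ.2 = ξ

variable {k : ℕ} {V E : Type}

/-- A `k`-graph (an `ℕ^k`-graph) is row-finite with no sources when
`0 < |vΛ^n| < ∞` for every vertex `v` and degree `n`. -/
def RowFiniteNoSources (Λ : PGraphStr (Fin k → ℕ) V E) : Prop :=
  ∀ (v : V) (n : Fin k → ℕ),
    {e : E | Λ.r e = v ∧ Λ.d e = n}.Finite ∧ {e : E | Λ.r e = v ∧ Λ.d e = n}.Nonempty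

/-- An infinite path in a `k`-graph `Λ`: a degree-preserving functor `Ω_{ℕ^k} → Λ`,
recorded by its segments `x(m,n)` for `m ≤ n`. -/
structure InfPath (Λ : PGraphStr (Fin k → ℕ) V E) where
  seg : ∀ m n : Fin k → ℕ, m ≤ n → E
  d_seg : ∀ m n (h : m ≤ n), Λ.d (seg m n h) = n - m
  src : ∀ m n p (h₁ : m ≤ n) (h₂ : n ≤ p), Λ.s (seg m n h₁) = Λ.r (seg n p h₂)
  seg_self : ∀ m, seg m m le_rfl = Λ.vert (Λ.r (seg m m le_rfl))
  comp_seg : ∀ m n p (h₁ : m ≤ n) (h₂ : n ≤ p),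
    Λ.comp (seg m n h₁) (seg n p h₂) = seg m p (h₁.trans h₂)

/-- The range `x(0)` of an infinite path. -/
def InfPath.range {Λ : PGraphStr (Fin k → ℕ) V E} (x : InfPath Λ) : V :=
  Λ.r (x.seg 0 0 le_rfl)

/-- The shift `σ^p(x)`, with `σ^p(x)(m,n) = x(m+p,n+p)`. -/
def InfPath.shift {Λ : PGraphStr (Fin k → ℕ) V E} (p : Fin k → ℕ) (x : InfPath Λ) :
    InfPath Λ where
  seg m n h := x.seg (m + p) (n + p) (add_le_add h (le_refl p))
  d_seg m n h := by
    rw [x.d_seg]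
    funext i
    simp [Nat.add_sub_add_right]
  src m n q h₁ h₂ := x.src _ _ _ _ _
  seg_self m := x.seg_self (m + p)
  comp_seg m n q h₁ h₂ := x.comp_seg _ _ _ _ _

/-- `Extends Λ y μ x` means `y = μx`: `y(0, d(μ)) = μ` and `σ^{d(μ)}(y) = x`. -/
def Extends (Λ : PGraphStr (Fin k → ℕ) V E) (y : InfPath Λ) (μ : E) (x : InfPath Λ) :
    Prop :=
  y.seg 0 (Λ.d μ) zero_le = μ ∧ y.shift (Λ.d μ) = x

/-- The relation `μ ∼ ν`: `s(μ) = s(ν)` and `μx = νx` for every infinite path `x`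
with range `s(μ)`. -/
def CKeq (Λ : PGraphStr (Fin k → ℕ) V E) (μ ν : E) : Prop :=
  Λ.s μ = Λ.s ν ∧ ∀ x y z : InfPath Λ, x.range = Λ.s μ →
    Extends Λ y μ x → Extends Λ z ν x → y = z

/-- The periodicity set `Per(Λ) = {d(μ) - d(ν) : μ ∼ ν} ⊆ ℤ^k`. -/
def PerSet (Λ : PGraphStr (Fin k → ℕ) V E) : Set (Fin k → ℤ) :=
  {g | ∃ μ ν : E, CKeq Λ μ ν ∧ g = fun i => (Λ.d μ i : ℤ) - (Λ.d ν i : ℤ)}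

/-- A maximal tail in a `k`-graph. -/
def IsMaximalTail (Λ : PGraphStr (Fin k → ℕ) V E) (T : Set V) : Prop :=
  T.Nonempty ∧
  (∀ v₁ ∈ T, ∀ v₂ ∈ T, ∃ w ∈ T,
    (∃ e : E, Λ.r e = v₁ ∧ Λ.s e = w) ∧ ∃ e : E, Λ.r e = v₂ ∧ Λ.s e = w) ∧
  (∀ v ∈ T, ∀ i : Fin k,
    ∃ e : E, Λ.r e = v ∧ Λ.d e = Pi.single i 1 ∧ Λ.s e ∈ T) ∧
  (∀ w ∈ T, ∀ (v : V) (e : E), Λ.r e = v → Λ.s e = w → v ∈ T)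

/-- `Σ_v = {(p,q) : σ^p(x) = σ^q(x) for all x ∈ vΛ^∞}`. -/
def SigmaV (Λ : PGraphStr (Fin k → ℕ) V E) (v : V) :
    Set ((Fin k → ℕ) × (Fin k → ℕ)) :=
  {pq | ∀ x : InfPath Λ, x.range = v → x.shift pq.1 = x.shift pq.2}

/-- `Σ_Λ = ⋃_v Σ_v`. -/
def SigmaL (Λ : PGraphStr (Fin k → ℕ) V E) : Set ((Fin k → ℕ) × (Fin k → ℕ)) :=
  ⋃ v : V, SigmaV Λ v

/-- The hereditary set `H_Per`. -/
def HPer (Λ : PGraphStr (Fin k → ℕ) V E) : Set V :=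
  {v | ∀ lam : E, Λ.r lam = v → ∀ m : Fin k → ℕ,
    (fun i => (Λ.d lam i : ℤ) - (m i : ℤ)) ∈ PerSet Λ →
    ∃ μ : E, Λ.r μ = v ∧ Λ.d μ = m ∧ CKeq Λ lam μ}

/-- The coordinatewise inclusion `ℕ^k →+ ℤ^k`. -/
def intCast (k : ℕ) : (Fin k → ℕ) →+ (Fin k → ℤ) where
  toFun n := fun i => (n i : ℤ)
  map_zero' := by funext i; simp
  map_add' a b := by funext i; simp

/-- The composite `ℕ^k → ℤ^k → ℤ^k/H`. -/
def quotHom (k : ℕ) (H : AddSubgroup (Fin k → ℤ)) :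
    (Fin k → ℕ) →+ (Fin k → ℤ) ⧸ H :=
  (QuotientAddGroup.mk' H).comp (intCast k)

/-- The submonoid `P = f(ℕ^k)` of `ℤ^k/H`. -/
def PMon (k : ℕ) (H : AddSubgroup (Fin k → ℤ)) : AddSubmonoid ((Fin k → ℤ) ⧸ H) :=
  AddMonoidHom.mrange (quotHom k H)

theorem mem_PMon (k : ℕ) (H : AddSubgroup (Fin k → ℤ)) (n : Fin k → ℕ) :
    quotHom k H n ∈ PMon k H :=
  ⟨n, rfl⟩

/-- An infinite path in a `P`-graph `Γ`: a degree-preserving functor `Ω_P → Γ`. -/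
structure PInfPath (P V E : Type) [AddCommMonoid P] (Γ : PGraphStr P V E) where
  seg : ∀ p q : P, (∃ t, p + t = q) → E
  d_seg : ∀ p q (h : ∃ t, p + t = q) (t : P), p + t = q → Γ.d (seg p q h) = t
  src : ∀ p q r (h₁ : ∃ t, p + t = q) (h₂ : ∃ t, q + t = r),
    Γ.s (seg p q h₁) = Γ.r (seg q r h₂)
  seg_self : ∀ p (h : ∃ t, p + t = p), seg p p h = Γ.vert (Γ.r (seg p p h))
  comp_seg : ∀ p q r (h₁ : ∃ t, p + t = q) (h₂ : ∃ t, q + t = r),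
    Γ.comp (seg p q h₁) (seg q r h₂) =
      seg p r ⟨h₁.choose + h₂.choose, by
        rw [← add_assoc, h₁.choose_spec, h₂.choose_spec]⟩

namespace Stmt4Aux

variable {P V E : Type} [AddCancelCommMonoid P] {Γ : PGraphStr P V E}

/-- Any zero-degree morphism is an identity. -/
theorem eq_vert_of_d_eq_zero (Γ : PGraphStr P V E) {β : E} (h : Γ.d β = 0) :
    β = Γ.vert (Γ.r β) := by
  obtain ⟨w, hw, hu⟩ := Γ.factor β 0 0 (by rw [h, add_zero])
  have e1 := hu (Γ.vert (Γ.r β), β) ⟨Γ.s_vert _, Γ.d_vert _, h, Γ.vert_comp β⟩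
  have e2 := hu (β, Γ.vert (Γ.s β)) ⟨(Γ.r_vert _).symm, h, Γ.d_vert _, Γ.comp_vert β⟩
  exact (congrArg Prod.fst (e1.trans e2.symm)).symm

/-- `β` occurs as the middle factor (from degree `p` to `p + t`) of `μ n`. -/
def MidAt (Γ : PGraphStr P V E) (μ : ℕ → E) (p t : P) (β : E) (n : ℕ) : Prop :=
  ∃ α γ, Γ.s α = Γ.r β ∧ Γ.s β = Γ.r γ ∧ Γ.d α = p ∧ Γ.d β = t ∧
    Γ.comp α (Γ.comp β γ) = μ n

def Mid (Γ : PGraphStr P V E) (μ : ℕ → E) (p t : P) (β : E) : Prop :=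
  ∃ n, MidAt Γ μ p t β n

theorem midAt_lift {μ : ℕ → E}
    (htail : ∀ m n, m ≤ n → ∃ τ, Γ.s (μ m) = Γ.r τ ∧ Γ.comp (μ m) τ = μ n)
    {p t : P} {β : E} {n : ℕ} (h : MidAt Γ μ p t β n) {n' : ℕ} (hn : n ≤ n') :
    MidAt Γ μ p t β n' := by
  obtain ⟨α, γ, hαβ, hβγ, hdα, hdβ, hc⟩ := h
  obtain ⟨τ, hτ1, hτ2⟩ := htail n n' hn
  have hrX : Γ.r (Γ.comp β γ) = Γ.r β := Γ.r_comp _ _ hβγ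
  have hsX : Γ.s (Γ.comp β γ) = Γ.s γ := Γ.s_comp _ _ hβγ
  have hαX : Γ.s α = Γ.r (Γ.comp β γ) := by rw [hrX]; exact hαβ
  have hsμ : Γ.s (μ n) = Γ.s γ := by rw [← hc, Γ.s_comp _ _ hαX, hsX]
  have hγτ : Γ.s γ = Γ.r τ := by rw [← hsμ]; exact hτ1
  refine ⟨α, Γ.comp γ τ, hαβ, ?_, hdα, hdβ, ?_⟩
  · rw [Γ.r_comp _ _ hγτ]; exact hβγ
  · rw [← Γ.comp_assoc β γ τ hβγ hγτ,
      ← Γ.comp_assoc α (Γ.comp β γ) τ hαX (by rw [hsX]; exact hγτ), hc, hτ2]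

theorem midAt_unique {μ : ℕ → E} {p t : P} {β₁ β₂ : E} {n : ℕ}
    (h₁ : MidAt Γ μ p t β₁ n) (h₂ : MidAt Γ μ p t β₂ n) : β₁ = β₂ := by
  obtain ⟨α₁, γ₁, ha1, hb1, hd1, he1, hc1⟩ := h₁
  obtain ⟨α₂, γ₂, ha2, hb2, hd2, he2, hc2⟩ := h₂
  have hr1 : Γ.r (Γ.comp β₁ γ₁) = Γ.r β₁ := Γ.r_comp _ _ hb1
  have hr2 : Γ.r (Γ.comp β₂ γ₂) = Γ.r β₂ := Γ.r_comp _ _ hb2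
  have hdX1 : Γ.d (Γ.comp β₁ γ₁) = t + Γ.d γ₁ := by rw [Γ.d_comp _ _ hb1, he1]
  have hdX2 : Γ.d (Γ.comp β₂ γ₂) = t + Γ.d γ₂ := by rw [Γ.d_comp _ _ hb2, he2]
  have hA1 : Γ.s α₁ = Γ.r (Γ.comp β₁ γ₁) := by rw [hr1]; exact ha1
  have hA2 : Γ.s α₂ = Γ.r (Γ.comp β₂ γ₂) := by rw [hr2]; exact ha2
  have hdμ : Γ.d (μ n) = p + Γ.d (Γ.comp β₁ γ₁) := by
    rw [← hc1, Γ.d_comp _ _ hA1, hd1]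
  have hdμ2 : Γ.d (μ n) = p + Γ.d (Γ.comp β₂ γ₂) := by
    rw [← hc2, Γ.d_comp _ _ hA2, hd2]
  have hXX : Γ.d (Γ.comp β₂ γ₂) = Γ.d (Γ.comp β₁ γ₁) :=
    add_left_cancel (hdμ2.symm.trans hdμ)
  obtain ⟨w, hw, hu⟩ := Γ.factor (μ n) p (Γ.d (Γ.comp β₁ γ₁)) hdμ
  have e1 := hu (α₁, Γ.comp β₁ γ₁) ⟨hA1, hd1, rfl, hc1⟩
  have e2 := hu (α₂, Γ.comp β₂ γ₂) ⟨hA2, hd2, hXX, hc2⟩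
  have eX : Γ.comp β₁ γ₁ = Γ.comp β₂ γ₂ := congrArg Prod.snd (e1.trans e2.symm)
  have hγγ : Γ.d γ₂ = Γ.d γ₁ :=
    add_left_cancel ((hdX2.symm.trans hXX).trans hdX1)
  obtain ⟨w', hw', hu'⟩ := Γ.factor (Γ.comp β₁ γ₁) t (Γ.d γ₁) hdX1
  have f1 := hu' (β₁, γ₁) ⟨hb1, he1, rfl, rfl⟩
  have f2 := hu' (β₂, γ₂) ⟨hb2, he2, hγγ, eX.symm⟩
  exact congrArg Prod.fst (f1.trans f2.symm)

theorem mid_unique {μ : ℕ → E}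
    (htail : ∀ m n, m ≤ n → ∃ τ, Γ.s (μ m) = Γ.r τ ∧ Γ.comp (μ m) τ = μ n)
    {p t : P} {β₁ β₂ : E} (h₁ : Mid Γ μ p t β₁) (h₂ : Mid Γ μ p t β₂) : β₁ = β₂ := by
  obtain ⟨n₁, h₁⟩ := h₁
  obtain ⟨n₂, h₂⟩ := h₂
  exact midAt_unique (midAt_lift htail h₁ (le_max_left n₁ n₂))
    (midAt_lift htail h₂ (le_max_right n₁ n₂))

theorem mid_ex {μ : ℕ → E} {c : P} (hd : ∀ n, Γ.d (μ n) = n • c)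
    (hcof : ∀ p : P, ∃ (n : ℕ) (t : P), p + t = n • c) (p t : P) :
    ∃ β, Mid Γ μ p t β := by
  obtain ⟨n, u, hu⟩ := hcof (p + t)
  obtain ⟨⟨α, ρ⟩, ⟨hs1, hd1, hd2, hc1⟩, _⟩ :=
    Γ.factor (μ n) p (t + u) (by rw [hd n, ← hu, add_assoc])
  obtain ⟨⟨β, γ⟩, ⟨hs2, hd3, hd4, hc2⟩, _⟩ := Γ.factor ρ t u hd2
  refine ⟨β, n, α, γ, ?_, hs2, hd1, hd3, ?_⟩
  · rw [← Γ.r_comp _ _ hs2, hc2]; exact hs1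
  · rw [hc2, hc1]

theorem mid_glue {μ : ℕ → E}
    (htail : ∀ m n, m ≤ n → ∃ τ, Γ.s (μ m) = Γ.r τ ∧ Γ.comp (μ m) τ = μ n)
    {p t₁ q t₂ : P} {β β' : E}
    (h₁ : Mid Γ μ p t₁ β) (h₂ : Mid Γ μ q t₂ β') (hq : p + t₁ = q) :
    Γ.s β = Γ.r β' ∧ Mid Γ μ p (t₁ + t₂) (Γ.comp β β') := by
  subst hq
  obtain ⟨n₁, H₁⟩ := h₁
  obtain ⟨n₂, H₂⟩ := h₂
  obtain ⟨α, γ, ha, hb, hdα, hdβ, hc⟩ := midAt_lift htail H₁ (le_max_left n₁ n₂)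
  obtain ⟨α', γ', ha', hb', hdα', hdβ', hc'⟩ := midAt_lift htail H₂ (le_max_right n₁ n₂)
  set N := max n₁ n₂ with hN
  obtain ⟨⟨α'', β''⟩, ⟨hs'', hdα'', hdβ'', hc''⟩, _⟩ := Γ.factor α' p t₁ hdα'
  have hrY : Γ.r (Γ.comp β' γ') = Γ.r β' := Γ.r_comp _ _ hb'
  have hsβ'' : Γ.s β'' = Γ.r (Γ.comp β' γ') := by
    rw [hrY, ← ha', ← hc'', Γ.s_comp _ _ hs'']
  have key : Γ.comp α'' (Γ.comp β'' (Γ.comp β' γ')) = μ N := by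
    rw [← Γ.comp_assoc α'' β'' (Γ.comp β' γ') hs'' hsβ'', hc'', hc']
  -- uniqueness at level p
  have hrX : Γ.r (Γ.comp β γ) = Γ.r β := Γ.r_comp _ _ hb
  have hA : Γ.s α = Γ.r (Γ.comp β γ) := by rw [hrX]; exact ha
  have hrY' : Γ.r (Γ.comp β'' (Γ.comp β' γ')) = Γ.r β'' := Γ.r_comp _ _ hsβ''
  have hA'' : Γ.s α'' = Γ.r (Γ.comp β'' (Γ.comp β' γ')) := by rw [hrY']; exact hs''
  have hdμ : Γ.d (μ N) = p + Γ.d (Γ.comp β γ) := by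
    rw [← hc, Γ.d_comp _ _ hA, hdα]
  have hdμ2 : Γ.d (μ N) = p + Γ.d (Γ.comp β'' (Γ.comp β' γ')) := by
    rw [← key, Γ.d_comp _ _ hA'', hdα'']
  have hXY : Γ.d (Γ.comp β'' (Γ.comp β' γ')) = Γ.d (Γ.comp β γ) :=
    add_left_cancel (hdμ2.symm.trans hdμ)
  obtain ⟨w, hw, hu⟩ := Γ.factor (μ N) p (Γ.d (Γ.comp β γ)) hdμ
  have e1 := hu (α, Γ.comp β γ) ⟨hA, hdα, rfl, hc⟩
  have e2 := hu (α'', Γ.comp β'' (Γ.comp β' γ')) ⟨hA'', hdα'', hXY, key⟩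
  have eX : Γ.comp β γ = Γ.comp β'' (Γ.comp β' γ') := congrArg Prod.snd (e1.trans e2.symm)
  -- uniqueness at level t₁
  have hdX : Γ.d (Γ.comp β γ) = t₁ + Γ.d γ := by rw [Γ.d_comp _ _ hb, hdβ]
  have hdX2 : Γ.d (Γ.comp β γ) = t₁ + Γ.d (Γ.comp β' γ') := by
    rw [eX, Γ.d_comp _ _ hsβ'', hdβ'']
  have hγZ : Γ.d (Γ.comp β' γ') = Γ.d γ := add_left_cancel (hdX2.symm.trans hdX)
  obtain ⟨w', hw', hu'⟩ := Γ.factor (Γ.comp β γ) t₁ (Γ.d γ) hdX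
  have f1 := hu' (β, γ) ⟨hb, hdβ, rfl, rfl⟩
  have f2 := hu' (β'', Γ.comp β' γ') ⟨hsβ'', hdβ'', hγZ, eX.symm⟩
  have hββ'' : β = β'' := congrArg Prod.fst (f1.trans f2.symm)
  have hγ : γ = Γ.comp β' γ' := congrArg Prod.snd (f1.trans f2.symm)
  have hsrc : Γ.s β = Γ.r β' := by rw [hb, hγ, hrY]
  refine ⟨hsrc, N, α, γ', ?_, ?_, hdα, ?_, ?_⟩
  · rw [Γ.r_comp _ _ hsrc]; exact ha
  · rw [Γ.s_comp _ _ hsrc]; exact hb'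
  · rw [Γ.d_comp _ _ hsrc, hdβ, hdβ']
  · rw [Γ.comp_assoc β β' γ' hsrc hb', ← hγ, hc]

theorem mid_range {μ : ℕ → E} {v : V} (hr : ∀ n, Γ.r (μ n) = v) {t : P} {β : E}
    (h : Mid Γ μ 0 t β) : Γ.r β = v := by
  obtain ⟨n, α, γ, ha, hb, hdα, _, hc⟩ := h
  have hsα : Γ.s α = Γ.r α := by
    conv_lhs => rw [eq_vert_of_d_eq_zero Γ hdα]
    rw [Γ.s_vert]
  have hA : Γ.s α = Γ.r (Γ.comp β γ) := by rw [Γ.r_comp _ _ hb]; exact ha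
  rw [← ha, hsα, ← Γ.r_comp _ _ hA, hc, hr n]

/-- The greedily-constructed chain of composable paths of degree `n • c`. -/
def chain (Γ : PGraphStr P V E) (v : V) (f : V → E) : ℕ → E
  | 0 => Γ.vert v
  | n + 1 => Γ.comp (chain Γ v f n) (f (Γ.s (chain Γ v f n)))

theorem chain_r {v : V} {f : V → E} (hf : ∀ w, Γ.r (f w) = w) :
    ∀ n, Γ.r (chain Γ v f n) = v
  | 0 => Γ.r_vert v
  | n + 1 => by
    rw [chain, Γ.r_comp _ _ (hf _).symm]
    exact chain_r hf n

theorem chain_d {v : V} {f : V → E} {c : P} (hf : ∀ w, Γ.r (f w) = w)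
    (hfd : ∀ w, Γ.d (f w) = c) : ∀ n, Γ.d (chain Γ v f n) = n • c
  | 0 => by rw [chain, Γ.d_vert, zero_nsmul]
  | n + 1 => by
    rw [chain, Γ.d_comp _ _ (hf _).symm, chain_d hf hfd n, hfd, succ_nsmul]

theorem chain_tail {v : V} {f : V → E} (hf : ∀ w, Γ.r (f w) = w)
    (m n : ℕ) (hmn : m ≤ n) : ∃ τ, Γ.s (chain Γ v f m) = Γ.r τ ∧
      Γ.comp (chain Γ v f m) τ = chain Γ v f n := by
  induction n, hmn using Nat.le_induction with
  | base => exact ⟨Γ.vert (Γ.s (chain Γ v f m)), (Γ.r_vert _).symm, Γ.comp_vert _⟩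
  | succ n hmn ih =>
    obtain ⟨τ, h1, h2⟩ := ih
    have hsτ : Γ.s (chain Γ v f n) = Γ.s τ := by rw [← h2, Γ.s_comp _ _ h1]
    have hτe : Γ.s τ = Γ.r (f (Γ.s (chain Γ v f n))) := by rw [hf, hsτ]
    refine ⟨Γ.comp τ (f (Γ.s (chain Γ v f n))), ?_, ?_⟩
    · rw [Γ.r_comp _ _ hτe]; exact h1
    · rw [← Γ.comp_assoc _ _ _ h1 hτe, h2, chain]

end Stmt4Aux

/-- If `P` is a finitely generated cancellative commutative monoid and `Γ` is a
row-finite `P`-graph with no sources, then every vertex `v` is the range `x(0,0)` of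
some infinite path (degree-preserving functor) `x : Ω_P → Γ`. -/
theorem stmt4 (P V E : Type) [AddCancelCommMonoid P] [AddMonoid.FG P] [Countable E]
    (Γ : PGraphStr P V E)
    (hΓ : ∀ (v : V) (p : P),
      {e : E | Γ.r e = v ∧ Γ.d e = p}.Finite ∧ {e : E | Γ.r e = v ∧ Γ.d e = p}.Nonempty)
    (v : V) :
    ∃ x : PInfPath P V E Γ, Γ.r (x.seg 0 0 ⟨0, add_zero 0⟩) = v := by
  classical
  open Stmt4Aux in
  -- a cofinal element `c` of `P`
  obtain ⟨S, hS⟩ := AddMonoid.FG.fg_top (M := P)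
  set c : P := ∑ s ∈ S, s with hc
  have hcof : ∀ p : P, ∃ (n : ℕ) (t : P), p + t = n • c := by
    intro p
    have hp : p ∈ AddSubmonoid.closure (S : Set P) := by rw [hS]; trivial
    induction hp using AddSubmonoid.closure_induction with
    | mem x hx =>
      refine ⟨1, ∑ s ∈ S.erase x, s, ?_⟩
      rw [one_nsmul, hc]
      exact Finset.add_sum_erase S id hx
    | zero => exact ⟨0, 0, by rw [add_zero, zero_nsmul]⟩
    | add x y hx hy ihx ihy =>
      obtain ⟨n, t, ht⟩ := ihx
      obtain ⟨m, u, hu⟩ := ihy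
      exact ⟨n + m, t + u, by rw [add_add_add_comm, ht, hu, add_nsmul]⟩
  -- a choice of an edge of degree `c` out of every vertex
  choose f hf using fun w => (hΓ w c).2
  simp only [Set.mem_setOf_eq] at hf
  have hf1 : ∀ w, Γ.r (f w) = w := fun w => (hf w).1
  have hf2 : ∀ w, Γ.d (f w) = c := fun w => (hf w).2
  set μ : ℕ → E := chain Γ v f with hμ
  have hr : ∀ n, Γ.r (μ n) = v := chain_r hf1
  have hd : ∀ n, Γ.d (μ n) = n • c := chain_d hf1 hf2
  have htail : ∀ m n, m ≤ n → ∃ τ, Γ.s (μ m) = Γ.r τ ∧ Γ.comp (μ m) τ = μ n :=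
    chain_tail hf1
  have hex : ∀ p t : P, ∃ β, Mid Γ μ p t β := mid_ex hd hcof
  refine ⟨⟨fun p q h => (hex p h.choose).choose, ?_, ?_, ?_, ?_⟩, ?_⟩
  · -- d_seg
    intro p q h t ht
    have hspec := (hex p h.choose).choose_spec
    obtain ⟨n, α, γ, _, _, _, hdβ, _⟩ := hspec
    rw [hdβ]
    exact (add_left_cancel (ht.trans h.choose_spec.symm)).symm
  · -- src
    intro p q r h₁ h₂
    have hspec₁ := (hex p h₁.choose).choose_spec
    have hspec₂ := (hex q h₂.choose).choose_spec
    exact (mid_glue htail hspec₁ hspec₂ h₁.choose_spec).1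
  · -- seg_self
    intro p h
    have hspec := (hex p h.choose).choose_spec
    obtain ⟨n, α, γ, _, _, _, hdβ, _⟩ := hspec
    have h0 : h.choose = 0 := add_left_cancel (h.choose_spec.trans (add_zero p).symm)
    exact eq_vert_of_d_eq_zero Γ (by rw [hdβ, h0])
  · -- comp_seg
    intro p q r h₁ h₂
    have hspec₁ := (hex p h₁.choose).choose_spec
    have hspec₂ := (hex q h₂.choose).choose_spec
    have hcomp := (mid_glue htail hspec₁ hspec₂ h₁.choose_spec).2
    set h₃ : ∃ t, p + t = r := ⟨h₁.choose + h₂.choose, by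
      rw [← add_assoc, h₁.choose_spec, h₂.choose_spec]⟩ with hh₃
    have hspec₃ := (hex p h₃.choose).choose_spec
    have ht3 : h₃.choose = h₁.choose + h₂.choose := by
      apply add_left_cancel (a := p)
      rw [h₃.choose_spec, ← add_assoc, h₁.choose_spec, h₂.choose_spec]
    rw [← ht3] at hcomp
    exact mid_unique htail hcomp hspec₃
  · -- range
    set h : ∃ t : P, 0 + t = 0 := ⟨0, add_zero 0⟩ with hh
    exact mid_range hr (hex 0 h.choose).choose_spec
end

section
/- Let Λ be a row-finite k-graph with no sources such that Λ⁰ is a maximal tail, q : ℤ^k → ℤ^k/Per(Λ) the quotient map, and H = H_Per. Then the quotient category Γ = (HΛ)/∼ with degree map d̃([λ]) = q(d(λ)) is a q(ℕ^k)-graph (it satisfies the unique factorisation property over the monoid q(ℕ^k)), and the map λ ↦ ([λ], d(λ)) is an isomorphism of k-graphs from HΛ onto the pullback q*Γ. -/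
variable {k : ℕ} {V E : Type}

/-- Paths of `Λ` with range in `H_Per`. -/
def HE (Λ : PGraphStr (Fin k → ℕ) V E) := {e : E // Λ.r e ∈ HPer Λ}

/-- Vertices of `Λ` belonging to `H_Per`. -/
def HV (Λ : PGraphStr (Fin k → ℕ) V E) := {v : V // v ∈ HPer Λ}

/-- The quotient `(H_Per Λ)/∼` of the subcategory `H_Per Λ` by the relation `∼`. -/
def QuotE (Λ : PGraphStr (Fin k → ℕ) V E) :=
  Quot fun a b : HE Λ => CKeq Λ a.1 b.1

/-- `Per(Λ)` as a subgroup of `ℤ^k` (its subgroup closure; by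
Theorem 4.2(1) of the paper this closure equals `Per(Λ)` itself). -/
def PerQuot (Λ : PGraphStr (Fin k → ℕ) V E) : AddSubgroup (Fin k → ℤ) :=
  AddSubgroup.closure (PerSet Λ)

/-- The monoid `P = q(ℕ^k) ⊆ ℤ^k/Per(Λ)`. -/
def PerMon (Λ : PGraphStr (Fin k → ℕ) V E) :
    AddSubmonoid ((Fin k → ℤ) ⧸ PerQuot Λ) :=
  PMon k (PerQuot Λ)

/-- `q(n) ∈ P` for `n ∈ ℕ^k`. -/
def pdeg (Λ : PGraphStr (Fin k → ℕ) V E) (n : Fin k → ℕ) : ↥(PerMon Λ) :=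
  ⟨quotHom k (PerQuot Λ) n, mem_PMon k (PerQuot Λ) n⟩

/-- The morphisms of the pullback `q*Γ` of a `P`-graph structure `str` on the
quotient `(H_Per Λ)/∼`. -/
def PullE (Λ : PGraphStr (Fin k → ℕ) V E)
    (str : PGraphStr (↥(PerMon Λ)) (HV Λ) (QuotE Λ)) :=
  {x : QuotE Λ × (Fin k → ℕ) // str.d x.1 = pdeg Λ x.2}


namespace PGraphStr

variable {k : ℕ} {V E : Type} (Λ : PGraphStr (Fin k → ℕ) V E)

/-! ### Factorisation API -/

noncomputable def fpart (ξ : E) (p q : Fin k → ℕ) (h : Λ.d ξ = p + q) : E × E :=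
  (Λ.factor ξ p q h).choose

lemma fpart_spec (ξ : E) (p q : Fin k → ℕ) (h : Λ.d ξ = p + q) :
    Λ.s (Λ.fpart ξ p q h).1 = Λ.r (Λ.fpart ξ p q h).2 ∧
    Λ.d (Λ.fpart ξ p q h).1 = p ∧ Λ.d (Λ.fpart ξ p q h).2 = q ∧
    Λ.comp (Λ.fpart ξ p q h).1 (Λ.fpart ξ p q h).2 = ξ :=
  (Λ.factor ξ p q h).choose_spec.1

lemma fpart_eq {ξ : E} {p q : Fin k → ℕ} (h : Λ.d ξ = p + q) {η ζ : E}
    (h1 : Λ.s η = Λ.r ζ) (h2 : Λ.d η = p) (h3 : Λ.d ζ = q) (h4 : Λ.comp η ζ = ξ) :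
    η = (Λ.fpart ξ p q h).1 ∧ ζ = (Λ.fpart ξ p q h).2 := by
  have := (Λ.factor ξ p q h).choose_spec.2 (η, ζ) ⟨h1, h2, h3, h4⟩
  exact ⟨congrArg Prod.fst this, congrArg Prod.snd this⟩

lemma factor_unique {ξ : E} {p q : Fin k → ℕ} (h : Λ.d ξ = p + q) {η ζ η' ζ' : E}
    (h1 : Λ.s η = Λ.r ζ) (h2 : Λ.d η = p) (h3 : Λ.d ζ = q) (h4 : Λ.comp η ζ = ξ)
    (h1' : Λ.s η' = Λ.r ζ') (h2' : Λ.d η' = p) (h3' : Λ.d ζ' = q)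
    (h4' : Λ.comp η' ζ' = ξ) : η = η' ∧ ζ = ζ' := by
  have a := Λ.fpart_eq h h1 h2 h3 h4
  have b := Λ.fpart_eq h h1' h2' h3' h4'
  exact ⟨a.1.trans b.1.symm, a.2.trans b.2.symm⟩

lemma eq_vert_of_d_zero {e : E} (h : Λ.d e = 0) : e = Λ.vert (Λ.r e) := by
  have h0 : Λ.d e = 0 + 0 := by rw [h, add_zero]
  have h1 := Λ.fpart_eq h0 (η := Λ.vert (Λ.r e)) (ζ := e)
    (by rw [Λ.s_vert]) (Λ.d_vert _) h (Λ.vert_comp e)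
  have h2 := Λ.fpart_eq h0 (η := e) (ζ := Λ.vert (Λ.s e))
    (by rw [Λ.r_vert]) h (Λ.d_vert _) (Λ.comp_vert e)
  exact h2.1.trans h1.1.symm

lemma sub_ok {n d : Fin k → ℕ} (h : n ≤ d) : d = n + (d - n) := by
  have h' : ∀ i, n i ≤ d i := h
  funext i
  have := h' i
  simp only [Pi.add_apply, Pi.sub_apply]
  omega

noncomputable def ffst (ξ : E) (n : Fin k → ℕ) (h : n ≤ Λ.d ξ) : E :=
  (Λ.fpart ξ n (Λ.d ξ - n) (sub_ok h)).1

noncomputable def fsnd (ξ : E) (n : Fin k → ℕ) (h : n ≤ Λ.d ξ) : E :=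
  (Λ.fpart ξ n (Λ.d ξ - n) (sub_ok h)).2

lemma d_ffst (ξ : E) (n : Fin k → ℕ) (h : n ≤ Λ.d ξ) : Λ.d (Λ.ffst ξ n h) = n :=
  (Λ.fpart_spec ξ n _ (sub_ok h)).2.1

lemma d_fsnd (ξ : E) (n : Fin k → ℕ) (h : n ≤ Λ.d ξ) :
    Λ.d (Λ.fsnd ξ n h) = Λ.d ξ - n :=
  (Λ.fpart_spec ξ n _ (sub_ok h)).2.2.1

lemma s_ffst (ξ : E) (n : Fin k → ℕ) (h : n ≤ Λ.d ξ) :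
    Λ.s (Λ.ffst ξ n h) = Λ.r (Λ.fsnd ξ n h) :=
  (Λ.fpart_spec ξ n _ (sub_ok h)).1

lemma comp_ffst_fsnd (ξ : E) (n : Fin k → ℕ) (h : n ≤ Λ.d ξ) :
    Λ.comp (Λ.ffst ξ n h) (Λ.fsnd ξ n h) = ξ :=
  (Λ.fpart_spec ξ n _ (sub_ok h)).2.2.2

lemma ffst_fsnd_eq {ξ : E} {n : Fin k → ℕ} (h : n ≤ Λ.d ξ) {α β : E}
    (h1 : Λ.s α = Λ.r β) (h2 : Λ.d α = n) (h3 : Λ.comp α β = ξ) :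
    α = Λ.ffst ξ n h ∧ β = Λ.fsnd ξ n h := by
  have hdβ : Λ.d β = Λ.d ξ - n := by
    have := Λ.d_comp α β h1
    rw [h3, h2] at this
    funext i
    have := congrFun this i
    simp only [Pi.add_apply, Pi.sub_apply] at *
    omega
  exact Λ.fpart_eq (sub_ok h) h1 h2 hdβ h3

lemma r_ffst (ξ : E) (n : Fin k → ℕ) (h : n ≤ Λ.d ξ) : Λ.r (Λ.ffst ξ n h) = Λ.r ξ := by
  conv_rhs => rw [← Λ.comp_ffst_fsnd ξ n h]
  rw [Λ.r_comp _ _ (Λ.s_ffst ξ n h)]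

lemma s_fsnd (ξ : E) (n : Fin k → ℕ) (h : n ≤ Λ.d ξ) : Λ.s (Λ.fsnd ξ n h) = Λ.s ξ := by
  conv_rhs => rw [← Λ.comp_ffst_fsnd ξ n h]
  rw [Λ.s_comp _ _ (Λ.s_ffst ξ n h)]

lemma r_fsnd (ξ : E) (n : Fin k → ℕ) (h : n ≤ Λ.d ξ) :
    Λ.r (Λ.fsnd ξ n h) = Λ.s (Λ.ffst ξ n h) := (Λ.s_ffst ξ n h).symm

lemma ffst_self (ξ : E) (h : Λ.d ξ ≤ Λ.d ξ) : Λ.ffst ξ (Λ.d ξ) h = ξ :=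
  ((Λ.ffst_fsnd_eq h (α := ξ) (β := Λ.vert (Λ.s ξ)) (by rw [Λ.r_vert]) rfl
    (Λ.comp_vert ξ)).1).symm

lemma fsnd_zero (ξ : E) (h : (0 : Fin k → ℕ) ≤ Λ.d ξ) : Λ.fsnd ξ 0 h = ξ :=
  ((Λ.ffst_fsnd_eq h (α := Λ.vert (Λ.r ξ)) (β := ξ) (by rw [Λ.s_vert]) (Λ.d_vert _)
    (Λ.vert_comp ξ)).2).symm

lemma ffst_ffst (ξ : E) (m n : Fin k → ℕ) (hmn : m ≤ n) (h : n ≤ Λ.d ξ)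
    (hm : m ≤ Λ.d ξ) :
    Λ.ffst (Λ.ffst ξ n h) m (by rw [Λ.d_ffst]; exact hmn) = Λ.ffst ξ m hm := by
  set A := Λ.ffst ξ n h with hA
  have hmA : m ≤ Λ.d A := by rw [Λ.d_ffst]; exact hmn
  -- pair (ffst A m, comp (fsnd A m) (fsnd ξ n)) factors ξ at m
  have hs1 : Λ.s (Λ.fsnd A m hmA) = Λ.r (Λ.fsnd ξ n h) := by
    rw [Λ.s_fsnd, Λ.r_fsnd]
  have key := Λ.ffst_fsnd_eq hm (α := Λ.ffst A m hmA)
      (β := Λ.comp (Λ.fsnd A m hmA) (Λ.fsnd ξ n h))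
      (by rw [Λ.r_comp _ _ hs1, Λ.r_fsnd]) (Λ.d_ffst _ _ _) ?_
  · exact key.1
  · rw [← Λ.comp_assoc _ _ _ (Λ.s_ffst A m hmA) hs1, Λ.comp_ffst_fsnd,
      Λ.comp_ffst_fsnd]

lemma pile {m n : Fin k → ℕ} (h : m ≤ n) : ∀ i, m i ≤ n i := h

lemma ffst_congr {ξ ξ' : E} (hx : ξ = ξ') {n : Fin k → ℕ} (h : n ≤ Λ.d ξ) :
    Λ.ffst ξ n h = Λ.ffst ξ' n (hx ▸ h) := by subst hx; rfl

lemma fsnd_congr {ξ ξ' : E} (hx : ξ = ξ') {n : Fin k → ℕ} (h : n ≤ Λ.d ξ) :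
    Λ.fsnd ξ n h = Λ.fsnd ξ' n (hx ▸ h) := by subst hx; rfl

end PGraphStr
namespace InfPath

variable {k : ℕ} {V E : Type} {Λ : PGraphStr (Fin k → ℕ) V E}

lemma seg_congr (x : InfPath Λ) {m n m' n' : Fin k → ℕ} (hm : m = m') (hn : n = n')
    (h : m ≤ n) : x.seg m n h = x.seg m' n' (hm ▸ hn ▸ h) := by
  subst hm; subst hn; rfl

lemma ext' {x y : InfPath Λ} (h : ∀ m n (hh : m ≤ n), x.seg m n hh = y.seg m n hh) :
    x = y := by
  cases x with
  | mk xs xd xsrc xself xcomp =>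
    cases y with
    | mk ys yd ysrc yself ycomp =>
      have : xs = ys := by
        funext m n hh
        exact h m n hh
      subst this
      rfl

/-- The vertex `x(n)` of an infinite path. -/
def vtx (x : InfPath Λ) (n : Fin k → ℕ) : V := Λ.r (x.seg n n le_rfl)

lemma range_eq_vtx (x : InfPath Λ) : x.range = x.vtx 0 := rfl

lemma r_seg (x : InfPath Λ) (m n : Fin k → ℕ) (h : m ≤ n) :
    Λ.r (x.seg m n h) = x.vtx m := by
  have h1 := x.src m m n le_rfl h
  rw [x.seg_self m, Λ.s_vert] at h1
  exact h1.symm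

lemma s_seg (x : InfPath Λ) (m n : Fin k → ℕ) (h : m ≤ n) :
    Λ.s (x.seg m n h) = x.vtx n := by
  have h1 := x.src m n n h le_rfl
  rw [h1, r_seg]

lemma shift_seg (x : InfPath Λ) (p m n : Fin k → ℕ) (h : m ≤ n) :
    (x.shift p).seg m n h = x.seg (m + p) (n + p) (add_le_add_left h p) := rfl

lemma shift_vtx (x : InfPath Λ) (p n : Fin k → ℕ) :
    (x.shift p).vtx n = x.vtx (n + p) := rfl

lemma shift_range (x : InfPath Λ) (p : Fin k → ℕ) :
    (x.shift p).range = x.vtx p := by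
  rw [range_eq_vtx, shift_vtx, zero_add]

lemma shift_shift (x : InfPath Λ) (p q : Fin k → ℕ) :
    (x.shift p).shift q = x.shift (q + p) := by
  apply ext'
  intro m n hh
  rw [shift_seg, shift_seg, shift_seg]
  exact x.seg_congr (add_assoc m q p) (add_assoc n q p) _

lemma shift_zero (x : InfPath Λ) : x.shift 0 = x := by
  apply ext'
  intro m n hh
  rw [shift_seg]
  exact x.seg_congr (add_zero m) (add_zero n) _

/-- Bound for the long-initial-segment lemma. -/
lemma le_d_seg (x : InfPath Λ) {n M : Fin k → ℕ} (hnM : n ≤ M) :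
    n ≤ Λ.d (x.seg 0 M zero_le) := by
  rw [x.d_seg]
  intro i
  have := PGraphStr.pile hnM i
  simp only [Pi.sub_apply, Pi.zero_apply]
  omega

/-- The initial segment of an initial segment. -/
lemma ffst_seg (x : InfPath Λ) {n M : Fin k → ℕ} (hnM : n ≤ M) :
    Λ.ffst (x.seg 0 M zero_le) n (x.le_d_seg hnM) = x.seg 0 n zero_le := by
  refine ((Λ.ffst_fsnd_eq _ (α := x.seg 0 n zero_le) (β := x.seg n M hnM)
    (x.src 0 n M _ _) ?_ (x.comp_seg 0 n M _ _)).1).symm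
  rw [x.d_seg]
  funext i
  simp only [Pi.sub_apply, Pi.zero_apply]
  omega

lemma fsnd_seg (x : InfPath Λ) {m n : Fin k → ℕ} (hmn : m ≤ n) :
    Λ.fsnd (x.seg 0 n zero_le) m (x.le_d_seg hmn) = x.seg m n hmn := by
  refine ((Λ.ffst_fsnd_eq _ (α := x.seg 0 m zero_le) (β := x.seg m n hmn)
    (x.src 0 m n _ _) ?_ (x.comp_seg 0 m n _ _)).2).symm
  rw [x.d_seg]
  funext i
  simp only [Pi.sub_apply, Pi.zero_apply]
  omega

/-- Any segment is determined by a long initial segment. -/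
lemma seg_eq_fsnd_ffst (x : InfPath Λ) (m n M : Fin k → ℕ) (hmn : m ≤ n) (hnM : n ≤ M) :
    x.seg m n hmn =
      Λ.fsnd (Λ.ffst (x.seg 0 M zero_le) n (x.le_d_seg hnM)) m
        (by rw [Λ.d_ffst]; exact hmn) := by
  calc x.seg m n hmn = Λ.fsnd (x.seg 0 n zero_le) m (x.le_d_seg hmn) :=
        (x.fsnd_seg hmn).symm
    _ = _ := Λ.fsnd_congr (x.ffst_seg hnM).symm _

end InfPath

namespace PGraphStr

variable {k : ℕ} {V E : Type} {Λ : PGraphStr (Fin k → ℕ) V E}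

/-- A coherent family of initial segments, from which an infinite path is built. -/
structure SegFam (Λ : PGraphStr (Fin k → ℕ) V E) where
  F : (Fin k → ℕ) → E
  hd : ∀ n, Λ.d (F n) = n
  hcoh : ∀ m n (h : m ≤ n), Λ.ffst (F n) m (by rw [hd]; exact h) = F m

namespace SegFam

variable (c : SegFam Λ)

lemma hb (n m : Fin k → ℕ) (h : m ≤ n) : m ≤ Λ.d (c.F n) := by
  rw [c.hd]; exact h

noncomputable def path : InfPath Λ where
  seg m n h := Λ.fsnd (c.F n) m (c.hb n m h)
  d_seg m n h := by rw [Λ.d_fsnd, c.hd]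
  src m n p h₁ h₂ := by
    rw [Λ.s_fsnd, Λ.r_fsnd, c.hcoh n p h₂]
  seg_self m := by
    apply Λ.eq_vert_of_d_zero
    rw [Λ.d_fsnd, c.hd]
    funext i
    simp only [Pi.sub_apply, Pi.zero_apply]
    omega
  comp_seg m n p h₁ h₂ := by
    have hsrc : Λ.s (Λ.fsnd (c.F n) m (c.hb n m h₁)) =
        Λ.r (Λ.fsnd (c.F p) n (c.hb p n h₂)) := by
      rw [Λ.s_fsnd, Λ.r_fsnd, c.hcoh n p h₂]
    refine ((Λ.ffst_fsnd_eq (c.hb p m (h₁.trans h₂)) (α := c.F m)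
      (β := Λ.comp (Λ.fsnd (c.F n) m (c.hb n m h₁)) (Λ.fsnd (c.F p) n (c.hb p n h₂)))
      ?_ (c.hd m) ?_).2)
    · rw [Λ.r_comp _ _ hsrc, Λ.r_fsnd, c.hcoh m n h₁]
    · have e1 : Λ.s (c.F m) = Λ.r (Λ.fsnd (c.F n) m (c.hb n m h₁)) := by
        rw [Λ.r_fsnd, c.hcoh m n h₁]
      rw [← Λ.comp_assoc _ _ _ e1 hsrc]
      have e2 : Λ.comp (c.F m) (Λ.fsnd (c.F n) m (c.hb n m h₁)) = c.F n := by
        conv_lhs => rw [← c.hcoh m n h₁]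
        exact Λ.comp_ffst_fsnd _ _ _
      rw [e2]
      conv_lhs => rw [← c.hcoh n p h₂]
      exact Λ.comp_ffst_fsnd _ _ _

lemma path_seg (m n : Fin k → ℕ) (h : m ≤ n) :
    c.path.seg m n h = Λ.fsnd (c.F n) m (c.hb n m h) := rfl

lemma path_range : c.path.range = Λ.r (c.F 0) := by
  show Λ.r (Λ.fsnd (c.F 0) 0 (c.hb 0 0 le_rfl)) = Λ.r (c.F 0)
  rw [Λ.fsnd_zero]

end SegFam

end PGraphStr
namespace PGraphStr

variable {k : ℕ} {V E : Type} {Λ : PGraphStr (Fin k → ℕ) V E}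

lemma ffst_congr2 {ξ : E} {n n' : Fin k → ℕ} (hn : n = n') (h : n ≤ Λ.d ξ) :
    Λ.ffst ξ n h = Λ.ffst ξ n' (hn ▸ h) := by subst hn; rfl

lemma fsnd_congr2 {ξ : E} {n n' : Fin k → ℕ} (hn : n = n') (h : n ≤ Λ.d ξ) :
    Λ.fsnd ξ n h = Λ.fsnd ξ n' (hn ▸ h) := by subst hn; rfl

section Paths

variable (hrf : RowFiniteNoSources Λ)

noncomputable def edgeTo (v : V) (n : Fin k → ℕ) : E := (hrf v n).2.choose

lemma edgeTo_spec (v : V) (n : Fin k → ℕ) :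
    Λ.r (edgeTo hrf v n) = v ∧ Λ.d (edgeTo hrf v n) = n := (hrf v n).2.choose_spec

noncomputable def chain (v : V) : ℕ → E
  | 0 => Λ.vert v
  | j + 1 => Λ.comp (chain v j) (edgeTo hrf (Λ.s (chain v j)) (fun _ => 1))

lemma chain_d (v : V) (j : ℕ) : Λ.d (chain hrf v j) = fun _ => j := by
  induction j with
  | zero =>
    show Λ.d (Λ.vert v) = _
    rw [Λ.d_vert]
    rfl
  | succ j ih =>
    show Λ.d (Λ.comp _ _) = _
    rw [Λ.d_comp _ _ (edgeTo_spec hrf _ _).1.symm, ih, (edgeTo_spec hrf _ _).2]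
    funext i
    simp [Pi.add_apply]

lemma chain_r (v : V) (j : ℕ) : Λ.r (chain hrf v j) = v := by
  induction j with
  | zero => exact Λ.r_vert v
  | succ j ih =>
    show Λ.r (Λ.comp _ _) = _
    rw [Λ.r_comp _ _ (edgeTo_spec hrf _ _).1.symm, ih]

lemma chain_le {i j : ℕ} (hij : i ≤ j) (v : V) :
    (fun _ => i : Fin k → ℕ) ≤ Λ.d (chain hrf v j) := by
  rw [chain_d]
  intro t
  exact hij

lemma ffst_chain_self (v : V) (j : ℕ) :
    Λ.ffst (chain hrf v j) (fun _ => j) (chain_le hrf le_rfl v) = chain hrf v j := by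
  calc Λ.ffst (chain hrf v j) (fun _ => j) (chain_le hrf le_rfl v)
      = Λ.ffst (chain hrf v j) (Λ.d (chain hrf v j)) le_rfl :=
        Λ.ffst_congr2 (by rw [chain_d]) _
    _ = chain hrf v j := Λ.ffst_self _ _

lemma chain_coh {i j : ℕ} (hij : i ≤ j) (v : V) :
    Λ.ffst (chain hrf v j) (fun _ => i) (chain_le hrf hij v) = chain hrf v i := by
  induction j with
  | zero =>
    have h0 : i = 0 := Nat.le_zero.mp hij
    subst h0
    exact ffst_chain_self hrf v 0
  | succ j ih =>
    rcases Nat.lt_or_ge i (j + 1) with hlt | hge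
    · have hij' : i ≤ j := Nat.lt_succ_iff.mp hlt
      -- first: ffst (chain (j+1)) (fun _ => j) = chain j
      have hstep : Λ.ffst (chain hrf v (j + 1)) (fun _ => j)
          (chain_le hrf (Nat.le_succ j) v) = chain hrf v j := by
        refine ((Λ.ffst_fsnd_eq _ (α := chain hrf v j)
          (β := edgeTo hrf (Λ.s (chain hrf v j)) (fun _ => 1))
          (edgeTo_spec hrf _ _).1.symm (chain_d hrf v j) rfl).1).symm
      calc Λ.ffst (chain hrf v (j + 1)) (fun _ => i) (chain_le hrf hij v)
          = Λ.ffst (Λ.ffst (chain hrf v (j + 1)) (fun _ => j)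
              (chain_le hrf (Nat.le_succ j) v)) (fun _ => i)
              (by rw [Λ.d_ffst]; intro t; exact hij') := by
            rw [Λ.ffst_ffst]
            intro t; exact hij'
        _ = Λ.ffst (chain hrf v j) (fun _ => i)
              (by rw [chain_d]; intro t; exact hij') := by
            exact Λ.ffst_congr hstep _
        _ = chain hrf v i := ih hij'
    · have h0 : i = j + 1 := le_antisymm hij hge
      subst h0
      exact ffst_chain_self hrf v _

/-- A coherent family of initial segments based at `v`. -/
noncomputable def famAt (v : V) : SegFam Λ where
  F n := Λ.ffst (chain hrf v (Finset.univ.sup n)) n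
    (by rw [chain_d]; intro t; exact Finset.le_sup (Finset.mem_univ t))
  hd n := Λ.d_ffst _ _ _
  hcoh m n h := by
    have hJ : Finset.univ.sup m ≤ Finset.univ.sup n :=
      Finset.sup_mono_fun (fun i _ => h i)
    have hm1 : m ≤ (fun _ => Finset.univ.sup m : Fin k → ℕ) := by
      intro t; exact Finset.le_sup (Finset.mem_univ t)
    have hm2 : (fun _ => Finset.univ.sup m : Fin k → ℕ) ≤
        Λ.d (chain hrf v (Finset.univ.sup n)) := by
      rw [chain_d]; intro t; exact hJ
    calc Λ.ffst (Λ.ffst (chain hrf v (Finset.univ.sup n)) n _) m _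
        = Λ.ffst (chain hrf v (Finset.univ.sup n)) m (le_trans hm1 hm2) :=
          Λ.ffst_ffst _ m n h _ _
      _ = Λ.ffst (Λ.ffst (chain hrf v (Finset.univ.sup n)) (fun _ => Finset.univ.sup m)
            (chain_le hrf hJ v)) m (by rw [Λ.d_ffst]; exact hm1) :=
          (Λ.ffst_ffst _ m _ hm1 _ _).symm
      _ = Λ.ffst (chain hrf v (Finset.univ.sup m)) m
            (by rw [chain_d]; exact hm1) := Λ.ffst_congr (chain_coh hrf hJ v) _
      _ = _ := rfl

/-- An infinite path with range `v`. -/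
noncomputable def pathAt (v : V) : InfPath Λ := (famAt hrf v).path

lemma pathAt_range (v : V) : (pathAt hrf v).range = v := by
  rw [pathAt, SegFam.path_range]
  show Λ.r (Λ.ffst (chain hrf v (Finset.univ.sup (0 : Fin k → ℕ))) 0
    (by rw [chain_d hrf]; intro t; exact Finset.le_sup (Finset.mem_univ t))) = v
  rw [Λ.r_ffst, chain_r]

end Paths

section Extend

variable (μ : E) (x : InfPath Λ)

lemma le_dC (hx : x.range = Λ.s μ) (b : Fin k → ℕ) :
    ∀ n, n ≤ Λ.d μ + b → n ≤ Λ.d (Λ.comp μ (x.seg 0 b zero_le)) := by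
  intro n hn
  rw [Λ.d_comp _ _ (by rw [x.r_seg, ← InfPath.range_eq_vtx, hx]), x.d_seg]
  intro i
  have h1 := pile hn i
  simp only [Pi.add_apply, Pi.sub_apply, Pi.zero_apply] at h1 ⊢
  omega

lemma comp_C (hx : x.range = Λ.s μ) {a b : Fin k → ℕ} (hab : a ≤ b) :
    Λ.comp (Λ.comp μ (x.seg 0 a zero_le)) (x.seg a b hab) =
      Λ.comp μ (x.seg 0 b zero_le) := by
  rw [Λ.comp_assoc _ _ _ (by rw [x.r_seg, ← InfPath.range_eq_vtx, hx])
    (by rw [x.s_seg, x.r_seg]), x.comp_seg]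

lemma ffst_C (hx : x.range = Λ.s μ) {a b : Fin k → ℕ} (hab : a ≤ b) :
    Λ.ffst (Λ.comp μ (x.seg 0 b zero_le)) (Λ.d μ + a)
        (le_dC μ x hx b _ (add_le_add_right hab _)) =
      Λ.comp μ (x.seg 0 a zero_le) := by
  refine ((Λ.ffst_fsnd_eq _ (α := Λ.comp μ (x.seg 0 a zero_le))
    (β := x.seg a b hab) ?_ ?_ (comp_C μ x hx hab)).1).symm
  · rw [Λ.s_comp _ _ (by rw [x.r_seg, ← InfPath.range_eq_vtx, hx]), x.s_seg, x.r_seg]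
  · rw [Λ.d_comp _ _ (by rw [x.r_seg, ← InfPath.range_eq_vtx, hx]), x.d_seg]
    funext i
    simp only [Pi.add_apply, Pi.sub_apply, Pi.zero_apply]
    omega

/-- The coherent family of initial segments of `μ · x`. -/
noncomputable def extFam (hx : x.range = Λ.s μ) : SegFam Λ where
  F n := Λ.ffst (Λ.comp μ (x.seg 0 (n ⊔ Λ.d μ - Λ.d μ) zero_le)) n
    (le_dC μ x hx _ _ (by intro i; simp only [Pi.add_apply, Pi.sub_apply, Pi.sup_apply]; omega))
  hd n := Λ.d_ffst _ _ _
  hcoh m n h := by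
    set bm := m ⊔ Λ.d μ - Λ.d μ with hbm
    set bn := n ⊔ Λ.d μ - Λ.d μ with hbn
    have hbmn : bm ≤ bn := by
      intro i
      have := pile h i
      simp only [hbm, hbn, Pi.sub_apply, Pi.sup_apply]
      omega
    have hle1 : m ≤ Λ.d μ + bm := by
      intro i
      simp only [hbm, Pi.add_apply, Pi.sub_apply, Pi.sup_apply]
      omega
    have hle3 : Λ.d μ + bm ≤ Λ.d (Λ.comp μ (x.seg 0 bn zero_le)) :=
      le_dC μ x hx bn _ (add_le_add_right hbmn _)
    calc Λ.ffst (Λ.ffst (Λ.comp μ (x.seg 0 bn zero_le)) n _) m _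
        = Λ.ffst (Λ.comp μ (x.seg 0 bn zero_le)) m
            (le_dC μ x hx bn _ (le_trans hle1 (add_le_add_right hbmn _))) :=
          Λ.ffst_ffst _ m n h _ _
      _ = Λ.ffst (Λ.ffst (Λ.comp μ (x.seg 0 bn zero_le)) (Λ.d μ + bm)
            hle3) m (by rw [Λ.d_ffst]; exact hle1) :=
          (Λ.ffst_ffst _ m _ hle1 _ _).symm
      _ = Λ.ffst (Λ.comp μ (x.seg 0 bm zero_le)) m
            (by
              refine le_dC μ x hx bm _ hle1) :=
          Λ.ffst_congr (ffst_C μ x hx hbmn) _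
      _ = _ := rfl

/-- The infinite path `μ · x`. -/
noncomputable def extPath (hx : x.range = Λ.s μ) : InfPath Λ := (extFam μ x hx).path

lemma extPath_extends (hx : x.range = Λ.s μ) : Extends Λ (extPath μ x hx) μ x := by
  constructor
  · -- initial segment is μ
    show Λ.fsnd ((extFam μ x hx).F (Λ.d μ)) 0
      ((extFam μ x hx).hb (Λ.d μ) 0 zero_le) = μ
    rw [Λ.fsnd_zero]
    show Λ.ffst (Λ.comp μ (x.seg 0 (Λ.d μ ⊔ Λ.d μ - Λ.d μ) zero_le)) (Λ.d μ)
      (le_dC μ x hx _ _ (by intro i; simp only [Pi.add_apply, Pi.sub_apply, Pi.sup_apply]; omega)) = μ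
    have h0 : (Λ.d μ ⊔ Λ.d μ - Λ.d μ : Fin k → ℕ) = 0 := by
      funext i; simp only [Pi.sub_apply, Pi.sup_apply, Pi.zero_apply]; omega
    have hseg : x.seg 0 (Λ.d μ ⊔ Λ.d μ - Λ.d μ) zero_le = Λ.vert (Λ.s μ) := by
      rw [x.seg_congr rfl h0]
      rw [x.seg_self 0]
      congr 1
    have hC : Λ.comp μ (x.seg 0 (Λ.d μ ⊔ Λ.d μ - Λ.d μ) zero_le) = μ := by
      rw [hseg]
      exact Λ.comp_vert μ
    calc Λ.ffst (Λ.comp μ (x.seg 0 (Λ.d μ ⊔ Λ.d μ - Λ.d μ) zero_le)) (Λ.d μ) _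
        = Λ.ffst μ (Λ.d μ) (hC ▸ le_refl _) := Λ.ffst_congr hC _
      _ = μ := Λ.ffst_self _ _
  · -- shift is x
    apply InfPath.ext'
    intro m n h
    rw [InfPath.shift_seg]
    show Λ.fsnd ((extFam μ x hx).F (n + Λ.d μ)) (m + Λ.d μ)
      ((extFam μ x hx).hb (n + Λ.d μ) (m + Λ.d μ) (add_le_add_left h _)) = x.seg m n h
    have hb : ((n + Λ.d μ) ⊔ Λ.d μ - Λ.d μ : Fin k → ℕ) = n := by
      funext i; simp only [Pi.add_apply, Pi.sub_apply, Pi.sup_apply]; omega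
    have hF : (extFam μ x hx).F (n + Λ.d μ) = Λ.comp μ (x.seg 0 n zero_le) := by
      show Λ.ffst (Λ.comp μ (x.seg 0 ((n + Λ.d μ) ⊔ Λ.d μ - Λ.d μ) zero_le))
        (n + Λ.d μ) (le_dC μ x hx _ _
          (by intro i; simp only [Pi.add_apply, Pi.sub_apply, Pi.sup_apply]; omega)) = _
      have hseg : x.seg 0 ((n + Λ.d μ) ⊔ Λ.d μ - Λ.d μ) zero_le =
          x.seg 0 n zero_le := x.seg_congr rfl hb _
      calc Λ.ffst (Λ.comp μ (x.seg 0 ((n + Λ.d μ) ⊔ Λ.d μ - Λ.d μ) zero_le))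
            (n + Λ.d μ) _
          = Λ.ffst (Λ.comp μ (x.seg 0 n zero_le)) (n + Λ.d μ)
              (by
                refine le_dC μ x hx n _ ?_
                intro i; simp only [Pi.add_apply]; omega) := by
            refine Λ.ffst_congr (by rw [hseg]) _
        _ = Λ.ffst (Λ.comp μ (x.seg 0 n zero_le))
              (Λ.d (Λ.comp μ (x.seg 0 n zero_le))) le_rfl := by
            refine Λ.ffst_congr2 ?_ _
            rw [Λ.d_comp _ _ (by rw [x.r_seg, ← InfPath.range_eq_vtx, hx]), x.d_seg]
            funext i
            simp only [Pi.add_apply, Pi.sub_apply, Pi.zero_apply]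
            omega
        _ = _ := Λ.ffst_self _ _
    have hchar := (Λ.ffst_fsnd_eq
        (ξ := Λ.comp μ (x.seg 0 n zero_le)) (n := Λ.d μ + m)
        (le_dC μ x hx n _ (add_le_add_right h _))
        (α := Λ.comp μ (x.seg 0 m zero_le)) (β := x.seg m n h)
        (by rw [Λ.s_comp _ _ (by rw [x.r_seg, ← InfPath.range_eq_vtx, hx]), x.s_seg, x.r_seg])
        (by rw [Λ.d_comp _ _ (by rw [x.r_seg, ← InfPath.range_eq_vtx, hx]), x.d_seg]
            funext i
            simp only [Pi.add_apply, Pi.sub_apply, Pi.zero_apply]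
            omega)
        (comp_C μ x hx h)).2
    calc Λ.fsnd ((extFam μ x hx).F (n + Λ.d μ)) (m + Λ.d μ) _
        = Λ.fsnd (Λ.comp μ (x.seg 0 n zero_le)) (m + Λ.d μ)
            (hF ▸ le_dC μ x hx n (m + Λ.d μ)
              (by intro i; have := pile h i; simp only [Pi.add_apply]; omega)) :=
          Λ.fsnd_congr hF _
      _ = Λ.fsnd (Λ.comp μ (x.seg 0 n zero_le)) (Λ.d μ + m)
            (le_dC μ x hx n _ (add_le_add_right h _)) :=
          Λ.fsnd_congr2 (add_comm m (Λ.d μ)) _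
      _ = x.seg m n h := hchar.symm

end Extend

section ExtendLemmas

variable {μ ν : E} {x y z w : InfPath Λ}

lemma _root_.Extends.range_eq (h : Extends Λ y μ x) : y.range = Λ.r μ := by
  rw [InfPath.range_eq_vtx, ← y.r_seg 0 (Λ.d μ) zero_le, h.1]

lemma _root_.Extends.src_range (h : Extends Λ y μ x) : x.range = Λ.s μ := by
  rw [← h.2, InfPath.shift_range, ← y.s_seg 0 (Λ.d μ) zero_le, h.1]

lemma extends_seg0 (h : Extends Λ y μ x) (n : Fin k → ℕ) :
    y.seg 0 (Λ.d μ + n) zero_le = Λ.comp μ (x.seg 0 n zero_le) := by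
  have h1 := y.comp_seg 0 (Λ.d μ) (Λ.d μ + n) zero_le (by intro i; simp only [Pi.add_apply]; omega)
  rw [← y.seg_congr (rfl : (0:Fin k → ℕ) = 0) rfl zero_le] at h1
  rw [← h1, h.1]
  congr 1
  have h2 : y.seg (Λ.d μ) (Λ.d μ + n) (by intro i; simp only [Pi.add_apply]; omega) =
      (y.shift (Λ.d μ)).seg 0 n zero_le := by
    rw [InfPath.shift_seg]
    exact y.seg_congr (zero_add _).symm (add_comm _ _) _
  rw [h2, h.2]

lemma extends_unique (h1 : Extends Λ y μ x) (h2 : Extends Λ z μ x) : y = z := by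
  apply InfPath.ext'
  intro m n hmn
  have hM : n ≤ Λ.d μ + n := by intro i; simp only [Pi.add_apply]; omega
  rw [y.seg_eq_fsnd_ffst m n (Λ.d μ + n) hmn hM, z.seg_eq_fsnd_ffst m n (Λ.d μ + n) hmn hM]
  have e : y.seg 0 (Λ.d μ + n) zero_le = z.seg 0 (Λ.d μ + n) zero_le := by
    rw [extends_seg0 h1, extends_seg0 h2]
  calc Λ.fsnd (Λ.ffst (y.seg 0 (Λ.d μ + n) zero_le) n _) m _
      = Λ.fsnd (Λ.ffst (z.seg 0 (Λ.d μ + n) zero_le) n (z.le_d_seg hM)) m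
          (by rw [Λ.d_ffst]; exact hmn) := by
        refine Λ.fsnd_congr (Λ.ffst_congr e _) _
    _ = _ := rfl

lemma extends_comp (hc : Λ.s μ = Λ.r ν) (hw : Extends Λ w ν x) (hy : Extends Λ y μ w) :
    Extends Λ y (Λ.comp μ ν) x := by
  have hd : Λ.d (Λ.comp μ ν) = Λ.d μ + Λ.d ν := Λ.d_comp μ ν hc
  constructor
  · rw [y.seg_congr rfl hd]
    rw [extends_seg0 hy (Λ.d ν), hw.1]
  · have : y.shift (Λ.d (Λ.comp μ ν)) = y.shift (Λ.d ν + Λ.d μ) := by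
      rw [hd, add_comm]
    rw [this, ← InfPath.shift_shift, hy.2, hw.2]

end ExtendLemmas

end PGraphStr
namespace PGraphStr

variable {k : ℕ} {V E : Type} {Λ : PGraphStr (Fin k → ℕ) V E}

section CKeqBasic

variable {μ ν ξ : E}

lemma _root_.CKeq.refl' (μ : E) : CKeq Λ μ μ :=
  ⟨rfl, fun _ _ _ _ hy hz => extends_unique hy hz⟩

lemma _root_.CKeq.symm' (h : CKeq Λ μ ν) : CKeq Λ ν μ :=
  ⟨h.1.symm, fun x y z hx hy hz => (h.2 x z y (hx.trans h.1.symm) hz hy).symm⟩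

lemma _root_.CKeq.trans' (h1 : CKeq Λ μ ν) (h2 : CKeq Λ ν ξ) : CKeq Λ μ ξ := by
  refine ⟨h1.1.trans h2.1, fun x y z hx hy hz => ?_⟩
  have hxν : x.range = Λ.s ν := hx.trans h1.1
  have hw := extPath_extends ν x hxν
  exact (h1.2 x y _ hx hy hw).trans (h2.2 x _ z hxν hw hz)

lemma _root_.CKeq.r_eq (hrf : RowFiniteNoSources Λ) (h : CKeq Λ μ ν) : Λ.r μ = Λ.r ν := by
  have hx : (pathAt hrf (Λ.s μ)).range = Λ.s μ := pathAt_range hrf _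
  have hy := extPath_extends μ _ hx
  have hz := extPath_extends ν _ (hx.trans h.1)
  have he := h.2 _ _ _ hx hy hz
  rw [← hy.range_eq, he, hz.range_eq]

lemma _root_.CKeq.eq_of_d_eq (hrf : RowFiniteNoSources Λ) (h : CKeq Λ μ ν)
    (hd : Λ.d μ = Λ.d ν) : μ = ν := by
  have hx : (pathAt hrf (Λ.s μ)).range = Λ.s μ := pathAt_range hrf _
  have hy := extPath_extends μ _ hx
  have hz := extPath_extends ν _ (hx.trans h.1)
  have he := h.2 _ _ _ hx hy hz
  have e1 := hy.1
  have e2 := hz.1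
  rw [he] at e1
  calc μ = (extPath ν _ (hx.trans h.1)).seg 0 (Λ.d μ) zero_le := e1.symm
    _ = (extPath ν _ (hx.trans h.1)).seg 0 (Λ.d ν) zero_le :=
        (extPath ν _ (hx.trans h.1)).seg_congr rfl hd _
    _ = ν := e2

end CKeqBasic

section Sigma

lemma sigma_symm {v : V} {pq : (Fin k → ℕ) × (Fin k → ℕ)} (h : pq ∈ SigmaV Λ v) :
    (pq.2, pq.1) ∈ SigmaV Λ v := fun x hx => (h x hx).symm

lemma _root_.CKeq.mem_sigma {μ ν : E} (h : CKeq Λ μ ν) :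
    (Λ.d μ, Λ.d ν) ∈ SigmaV Λ (Λ.s μ) := by
  intro x hx
  have hy := extPath_extends μ x hx
  have hz := extPath_extends ν x (hx.trans h.1)
  have hyz := h.2 x _ _ hx hy hz
  have h1 : (extPath μ x hx).shift (Λ.d μ) = x := hy.2
  have h2 : (extPath μ x hx).shift (Λ.d ν) = x := by rw [hyz]; exact hz.2
  show x.shift (Λ.d μ) = x.shift (Λ.d ν)
  calc x.shift (Λ.d μ)
      = ((extPath μ x hx).shift (Λ.d ν)).shift (Λ.d μ) := by rw [h2]
    _ = (extPath μ x hx).shift (Λ.d μ + Λ.d ν) := InfPath.shift_shift _ _ _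
    _ = (extPath μ x hx).shift (Λ.d ν + Λ.d μ) := by rw [add_comm]
    _ = ((extPath μ x hx).shift (Λ.d μ)).shift (Λ.d ν) :=
        (InfPath.shift_shift _ _ _).symm
    _ = x.shift (Λ.d ν) := by rw [h1]

lemma sigma_hered {v : V} {pq : (Fin k → ℕ) × (Fin k → ℕ)} (h : pq ∈ SigmaV Λ v)
    (e : E) (he : Λ.r e = v) : pq ∈ SigmaV Λ (Λ.s e) := by
  intro x hx
  have hy := extPath_extends e x hx
  set y := extPath e x hx with hy'
  have h1 : y.shift (Λ.d e) = x := hy.2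
  have h2 : y.shift pq.1 = y.shift pq.2 := h y (by rw [hy.range_eq, he])
  calc x.shift pq.1 = (y.shift (Λ.d e)).shift pq.1 := by rw [h1]
    _ = y.shift (pq.1 + Λ.d e) := InfPath.shift_shift _ _ _
    _ = y.shift (Λ.d e + pq.1) := by rw [add_comm]
    _ = (y.shift pq.1).shift (Λ.d e) := (InfPath.shift_shift _ _ _).symm
    _ = (y.shift pq.2).shift (Λ.d e) := by rw [h2]
    _ = y.shift (Λ.d e + pq.2) := InfPath.shift_shift _ _ _
    _ = y.shift (pq.2 + Λ.d e) := by rw [add_comm]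
    _ = (y.shift (Λ.d e)).shift pq.2 := (InfPath.shift_shift _ _ _).symm
    _ = x.shift pq.2 := by rw [h1]

lemma sigma_add {v : V} {m n m' n' : Fin k → ℕ} (h1 : (m, n) ∈ SigmaV Λ v)
    (h2 : (m', n') ∈ SigmaV Λ v) : (m + m', n + n') ∈ SigmaV Λ v := by
  intro x hx
  have e1 : x.shift m = x.shift n := h1 x hx
  have e2 : x.shift m' = x.shift n' := h2 x hx
  show x.shift (m + m') = x.shift (n + n')
  calc x.shift (m + m') = (x.shift m').shift m := (InfPath.shift_shift _ m' m).symm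
    _ = (x.shift n').shift m := by rw [e2]
    _ = x.shift (m + n') := InfPath.shift_shift _ n' m
    _ = x.shift (n' + m) := by rw [add_comm]
    _ = (x.shift m).shift n' := (InfPath.shift_shift _ m n').symm
    _ = (x.shift n).shift n' := by rw [e1]
    _ = x.shift (n' + n) := InfPath.shift_shift _ n n'
    _ = x.shift (n + n') := by rw [add_comm]

end Sigma

end PGraphStr
namespace PGraphStr

variable {k : ℕ} {V E : Type} {Λ : PGraphStr (Fin k → ℕ) V E}

section Nu

variable (n : Fin k → ℕ)

/-- For `z ∈ s(μ)Λ^∞`, the path `ν(z) := (μz)(0,n)`. -/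
noncomputable def NuF (μ : E) (z : InfPath Λ) (hz : z.range = Λ.s μ) : E :=
  (extPath μ z hz).seg 0 n zero_le

variable {μ : E}

lemma nuF_d (z : InfPath Λ) (hz : z.range = Λ.s μ) : Λ.d (NuF n μ z hz) = n := by
  rw [NuF, (extPath μ z hz).d_seg]
  funext i
  simp only [Pi.sub_apply, Pi.zero_apply]
  omega

lemma nuF_extends (hSig : (Λ.d μ, n) ∈ SigmaV Λ (Λ.r μ)) (z : InfPath Λ)
    (hz : z.range = Λ.s μ) : Extends Λ (extPath μ z hz) (NuF n μ z hz) z := by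
  constructor
  · exact (extPath μ z hz).seg_congr rfl (nuF_d n z hz) _
  · have h1 : Λ.d (NuF n μ z hz) = n := nuF_d n z hz
    rw [h1]
    have h2 := hSig (extPath μ z hz) (extPath_extends μ z hz).range_eq
    rw [← h2]
    exact (extPath_extends μ z hz).2

lemma nuF_r (z : InfPath Λ) (hz : z.range = Λ.s μ) : Λ.r (NuF n μ z hz) = Λ.r μ := by
  rw [NuF, InfPath.r_seg, ← InfPath.range_eq_vtx, (extPath_extends μ z hz).range_eq]

lemma nuF_s (hSig : (Λ.d μ, n) ∈ SigmaV Λ (Λ.r μ)) (z : InfPath Λ)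
    (hz : z.range = Λ.s μ) : Λ.s (NuF n μ z hz) = Λ.s μ := by
  rw [← (nuF_extends n hSig z hz).src_range]
  exact hz

lemma nu_bound (z : InfPath Λ) (hz : z.range = Λ.s μ) :
    n ≤ Λ.d (Λ.comp μ (z.seg 0 ((Λ.d μ ⊔ n) - Λ.d μ) zero_le)) := by
  rw [Λ.d_comp _ _ (by rw [z.r_seg, ← InfPath.range_eq_vtx, hz]), z.d_seg]
  intro i
  simp only [Pi.add_apply, Pi.sub_apply, Pi.sup_apply, Pi.zero_apply]
  omega

lemma nuF_formula (z : InfPath Λ) (hz : z.range = Λ.s μ) :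
    NuF n μ z hz =
      Λ.ffst (Λ.comp μ (z.seg 0 ((Λ.d μ ⊔ n) - Λ.d μ) zero_le)) n
        (nu_bound n z hz) := by
  set p := Λ.d μ ⊔ n with hp
  set a := p - Λ.d μ with ha
  have hμp : Λ.d μ ≤ p := by intro i; simp only [hp, Pi.sup_apply]; omega
  have hnp : n ≤ p := by intro i; simp only [hp, Pi.sup_apply]; omega
  have hstep : (extPath μ z hz).seg 0 p zero_le =
      Λ.comp μ (z.seg 0 a zero_le) := by
    have hc := (extPath μ z hz).comp_seg 0 (Λ.d μ) p zero_le hμp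
    rw [← hc, (extPath_extends μ z hz).1]
    congr 1
    have hidx : p = a + Λ.d μ := by
      funext i
      simp only [hp, ha, Pi.add_apply, Pi.sub_apply, Pi.sup_apply]
      omega
    calc (extPath μ z hz).seg (Λ.d μ) p hμp
        = (extPath μ z hz).seg (0 + Λ.d μ) (a + Λ.d μ) (by
            rw [← hidx, zero_add]; exact hμp) :=
          (extPath μ z hz).seg_congr (zero_add _).symm hidx _
      _ = ((extPath μ z hz).shift (Λ.d μ)).seg 0 a zero_le := by
          rw [InfPath.shift_seg]
      _ = z.seg 0 a zero_le := by rw [(extPath_extends μ z hz).2]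
  calc NuF n μ z hz
      = Λ.ffst ((extPath μ z hz).seg 0 p zero_le) n
          ((extPath μ z hz).le_d_seg hnp) := ((extPath μ z hz).ffst_seg hnp).symm
    _ = _ := Λ.ffst_congr hstep _

lemma nuF_local_a {z z' : InfPath Λ} (hz : z.range = Λ.s μ) (hz' : z'.range = Λ.s μ)
    (hseg : z.seg 0 ((Λ.d μ ⊔ n) - Λ.d μ) zero_le =
      z'.seg 0 ((Λ.d μ ⊔ n) - Λ.d μ) zero_le) :
    NuF n μ z hz = NuF n μ z' hz' := by
  rw [nuF_formula n z hz, nuF_formula n z' hz']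
  exact Λ.ffst_congr (by rw [hseg]) _

lemma nuF_local_b (hSig : (Λ.d μ, n) ∈ SigmaV Λ (Λ.r μ)) {z z' : InfPath Λ}
    (hz : z.range = Λ.s μ) (hz' : z'.range = Λ.s μ)
    (hseg : z.seg 0 ((n ⊔ Λ.d μ) - n) zero_le =
      z'.seg 0 ((n ⊔ Λ.d μ) - n) zero_le) :
    NuF n μ z hz = NuF n μ z' hz' := by
  set ν := NuF n μ z hz with hν
  have hνd : Λ.d ν = n := nuF_d n z hz
  have hνr : Λ.r ν = Λ.r μ := nuF_r n z hz
  have hνs : Λ.s ν = Λ.s μ := nuF_s n hSig z hz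
  have hzν : z.range = Λ.s ν := by rw [hνs]; exact hz
  have hz'ν : z'.range = Λ.s ν := by rw [hνs]; exact hz'
  have hSig' : (Λ.d ν, Λ.d μ) ∈ SigmaV Λ (Λ.r ν) := by
    rw [hνr, hνd]
    exact sigma_symm hSig
  have hEq : extPath ν z hzν = extPath μ z hz :=
    extends_unique (extPath_extends ν z hzν) (nuF_extends n hSig z hz)
  have hMz : NuF (Λ.d μ) ν z hzν = μ := by
    show (extPath ν z hzν).seg 0 (Λ.d μ) zero_le = μ
    rw [hEq]
    exact (extPath_extends μ z hz).1
  have hMz' : NuF (Λ.d μ) ν z' hz'ν = μ := by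
    refine Eq.trans (nuF_local_a (Λ.d μ) hz'ν hzν ?_) hMz
    have hidx : ((Λ.d ν ⊔ Λ.d μ) - Λ.d ν : Fin k → ℕ) = (n ⊔ Λ.d μ) - n := by
      rw [hνd]
    rw [z'.seg_congr rfl hidx, z.seg_congr rfl hidx]
    exact hseg.symm
  have hE2 : Extends Λ (extPath ν z' hz'ν) μ z' := by
    have h0 := nuF_extends (Λ.d μ) hSig' z' hz'ν
    rwa [hMz'] at h0
  have hEq2 : extPath ν z' hz'ν = extPath μ z' hz' :=
    extends_unique hE2 (extPath_extends μ z' hz')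
  have hfin : NuF n μ z' hz' = ν := by
    show (extPath μ z' hz').seg 0 n zero_le = ν
    rw [← hEq2]
    calc (extPath ν z' hz'ν).seg 0 n zero_le
        = (extPath ν z' hz'ν).seg 0 (Λ.d ν) zero_le :=
          (extPath ν z' hz'ν).seg_congr rfl hνd.symm _
      _ = ν := (extPath_extends ν z' hz'ν).1
  exact hfin.symm

end Nu

/-- The crucial step: a difference coming from `Σ_v` lies in `Per(Λ)`. -/
lemma sigma_diff_mem_per (hrf : RowFiniteNoSources Λ) {v : V} {m n : Fin k → ℕ}
    (hSig : (m, n) ∈ SigmaV Λ v) :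
    (fun i => (m i : ℤ) - (n i : ℤ)) ∈ PerSet Λ := by
  obtain ⟨hμr, hμd⟩ := edgeTo_spec hrf v m
  set μ := edgeTo hrf v m with hμ
  have hSig' : (Λ.d μ, n) ∈ SigmaV Λ (Λ.r μ) := by rw [hμr, hμd]; exact hSig
  set b := (n ⊔ Λ.d μ) - n with hb
  obtain ⟨hαr, hαd⟩ := edgeTo_spec hrf (Λ.s μ) b
  set α := edgeTo hrf (Λ.s μ) b with hα
  have hx0 : (pathAt hrf (Λ.s α)).range = Λ.s α := pathAt_range hrf _
  set z0 := extPath α (pathAt hrf (Λ.s α)) hx0 with hz0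
  have hz0r : z0.range = Λ.s μ := by
    rw [(extPath_extends α _ hx0).range_eq, hαr]
  set ν0 := NuF n μ z0 hz0r with hν0
  have hν0s : Λ.s ν0 = Λ.s μ := nuF_s n hSig' z0 hz0r
  have hν0d : Λ.d ν0 = n := nuF_d n z0 hz0r
  have hsν0α : Λ.s ν0 = Λ.r α := by rw [hν0s, hαr]
  have hsμα : Λ.s μ = Λ.r α := hαr.symm
  refine ⟨Λ.comp μ α, Λ.comp ν0 α, ⟨?_, ?_⟩, ?_⟩
  · rw [Λ.s_comp _ _ hsμα, Λ.s_comp _ _ hsν0α]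
  · intro x y z hx hy hz
    rw [Λ.s_comp _ _ hsμα] at hx
    have hw := extPath_extends α x hx
    set w := extPath α x hx with hw'
    have hwr : w.range = Λ.s μ := by rw [hw.range_eq, hαr]
    -- w.seg 0 b = α = z0.seg 0 b
    have e1 : w.seg 0 b zero_le = α := by
      rw [← hw.1]
      exact w.seg_congr rfl hαd.symm _
    have e2 : z0.seg 0 b zero_le = α := by
      rw [← (extPath_extends α _ hx0).1]
      exact z0.seg_congr rfl hαd.symm _
    have hνw : NuF n μ w hwr = ν0 :=
      nuF_local_b n hSig' hwr hz0r (e1.trans e2.symm)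
    have hY : Extends Λ (extPath μ w hwr) (Λ.comp μ α) x :=
      extends_comp hsμα hw (extPath_extends μ w hwr)
    have hZ : Extends Λ (extPath μ w hwr) (Λ.comp ν0 α) x := by
      refine extends_comp hsν0α hw ?_
      have h0 := nuF_extends n hSig' w hwr
      rwa [hνw] at h0
    exact (extends_unique hy hY).trans (extends_unique hz hZ).symm
  · funext i
    rw [Λ.d_comp _ _ hsμα, Λ.d_comp _ _ hsν0α, hμd, hν0d]
    simp only [Pi.add_apply]
    push_cast
    ring

end PGraphStr
namespace PGraphStr

variable {k : ℕ} {V E : Type} {Λ : PGraphStr (Fin k → ℕ) V E}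

/-- `Per(Λ)` is closed under the group operations (given a maximal tail). -/
noncomputable def perSub (hrf : RowFiniteNoSources Λ)
    (hmt : IsMaximalTail Λ (Set.univ : Set V)) : AddSubgroup (Fin k → ℤ) where
  carrier := PerSet Λ
  zero_mem' := by
    obtain ⟨v0, -⟩ := hmt.1
    refine ⟨Λ.vert v0, Λ.vert v0, CKeq.refl' _, ?_⟩
    funext i
    rw [Λ.d_vert]
    simp
  neg_mem' := by
    rintro g ⟨μ, ν, hck, rfl⟩
    refine ⟨ν, μ, hck.symm', ?_⟩
    funext i
    simp only [Pi.neg_apply]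
    ring
  add_mem' := by
    rintro g1 g2 ⟨μ1, ν1, hck1, rfl⟩ ⟨μ2, ν2, hck2, rfl⟩
    have hs1 := hck1.mem_sigma
    have hs2 := hck2.mem_sigma
    obtain ⟨w, -, ⟨e1, he1r, he1s⟩, ⟨e2, he2r, he2s⟩⟩ :=
      hmt.2.1 (Λ.s μ1) trivial (Λ.s μ2) trivial
    have hw1 : (Λ.d μ1, Λ.d ν1) ∈ SigmaV Λ w := by
      rw [← he1s]
      exact sigma_hered hs1 e1 he1r
    have hw2 : (Λ.d μ2, Λ.d ν2) ∈ SigmaV Λ w := by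
      rw [← he2s]
      exact sigma_hered hs2 e2 he2r
    have hsum := sigma_add hw1 hw2
    have hmem := sigma_diff_mem_per hrf hsum
    have heq : ((fun i => (Λ.d μ1 i : ℤ) - (Λ.d ν1 i : ℤ)) +
        fun i => (Λ.d μ2 i : ℤ) - (Λ.d ν2 i : ℤ)) =
        fun i => ((Λ.d μ1 + Λ.d μ2) i : ℤ) - ((Λ.d ν1 + Λ.d ν2) i : ℤ) := by
      funext i
      simp only [Pi.add_apply]
      push_cast
      ring
    rw [heq]
    exact hmem

lemma perQuot_subset (hrf : RowFiniteNoSources Λ)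
    (hmt : IsMaximalTail Λ (Set.univ : Set V)) :
    (PerQuot Λ : Set (Fin k → ℤ)) ⊆ PerSet Λ := by
  intro g hg
  have hle : PerQuot Λ ≤ perSub hrf hmt :=
    (AddSubgroup.closure_le (perSub hrf hmt)).mpr (fun x hx => hx)
  exact hle hg

lemma mem_perSet_of_quotHom_eq (hrf : RowFiniteNoSources Λ)
    (hmt : IsMaximalTail Λ (Set.univ : Set V)) {d1 d2 : Fin k → ℕ}
    (h : quotHom k (PerQuot Λ) d1 = quotHom k (PerQuot Λ) d2) :
    (fun i => (d1 i : ℤ) - (d2 i : ℤ)) ∈ PerSet Λ := by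
  have h' : intCast k d1 - intCast k d2 ∈ PerQuot Λ := by
    have h2 : ((intCast k d1 : Fin k → ℤ) : (Fin k → ℤ) ⧸ PerQuot Λ) = intCast k d2 := h
    rwa [QuotientAddGroup.eq_iff_sub_mem] at h2
  have heq : intCast k d1 - intCast k d2 = fun i => (d1 i : ℤ) - (d2 i : ℤ) := by
    funext i
    simp [intCast]
  rw [← heq]
  exact perQuot_subset hrf hmt h'

lemma pdeg_eq_iff_mem (hrf : RowFiniteNoSources Λ)
    (hmt : IsMaximalTail Λ (Set.univ : Set V)) {d1 d2 : Fin k → ℕ} :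
    pdeg Λ d1 = pdeg Λ d2 ↔ (fun i => (d1 i : ℤ) - (d2 i : ℤ)) ∈ PerSet Λ := by
  constructor
  · intro h
    exact mem_perSet_of_quotHom_eq hrf hmt (congrArg Subtype.val h)
  · intro h
    apply Subtype.ext
    show quotHom k (PerQuot Λ) d1 = quotHom k (PerQuot Λ) d2
    show ((intCast k d1 : Fin k → ℤ) : (Fin k → ℤ) ⧸ PerQuot Λ) = intCast k d2
    rw [QuotientAddGroup.eq_iff_sub_mem]
    have heq : intCast k d1 - intCast k d2 = fun i => (d1 i : ℤ) - (d2 i : ℤ) := by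
      funext i
      simp [intCast]
    rw [heq]
    exact AddSubgroup.subset_closure h

/-- `∼` is invariant under composition. -/
lemma _root_.CKeq.comp_congr (hrf : RowFiniteNoSources Λ) {μ μ' ν ν' : E}
    (h1 : CKeq Λ μ μ') (h2 : CKeq Λ ν ν') (hc : Λ.s μ = Λ.r ν) :
    CKeq Λ (Λ.comp μ ν) (Λ.comp μ' ν') := by
  have hrν : Λ.r ν = Λ.r ν' := h2.r_eq hrf
  have hc' : Λ.s μ' = Λ.r ν' := by rw [← h1.1, hc, hrν]
  refine ⟨by rw [Λ.s_comp _ _ hc, Λ.s_comp _ _ hc', h2.1], ?_⟩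
  intro x y z hx hy hz
  rw [Λ.s_comp _ _ hc] at hx
  have hxν' : x.range = Λ.s ν' := hx.trans h2.1
  have hw := extPath_extends ν x hx
  have hw' := extPath_extends ν' x hxν'
  have hww' : extPath ν x hx = extPath ν' x hxν' := h2.2 x _ _ hx hw hw'
  set w := extPath ν x hx with hwdef
  have hwμ : w.range = Λ.s μ := by rw [hw.range_eq, hc]
  have hwμ' : w.range = Λ.s μ' := by rw [hwμ, h1.1]
  have hY : Extends Λ (extPath μ w hwμ) (Λ.comp μ ν) x :=
    extends_comp hc hw (extPath_extends μ w hwμ)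
  have hYY' : extPath μ w hwμ = extPath μ' w hwμ' :=
    h1.2 w _ _ hwμ (extPath_extends μ w hwμ) (extPath_extends μ' w hwμ')
  have hwν' : Extends Λ w ν' x := by rw [hww']; exact hw'
  have hZ : Extends Λ (extPath μ' w hwμ') (Λ.comp μ' ν') x :=
    extends_comp hc' hwν' (extPath_extends μ' w hwμ')
  calc y = extPath μ w hwμ := extends_unique hy hY
    _ = extPath μ' w hwμ' := hYY'
    _ = z := (extends_unique hz hZ).symm

/-- `H_Per` is hereditary. -/
lemma hper_hered (hrf : RowFiniteNoSources Λ) {e : E} (he : Λ.r e ∈ HPer Λ) :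
    Λ.s e ∈ HPer Λ := by
  intro lam hlam m hm
  have hcomp : Λ.s e = Λ.r lam := hlam.symm
  have hcd : Λ.d (Λ.comp e lam) = Λ.d e + Λ.d lam := Λ.d_comp _ _ hcomp
  have hcr : Λ.r (Λ.comp e lam) = Λ.r e := Λ.r_comp _ _ hcomp
  have hm' : (fun i => (Λ.d (Λ.comp e lam) i : ℤ) - ((Λ.d e + m) i : ℤ)) ∈ PerSet Λ := by
    have heq : (fun i => (Λ.d (Λ.comp e lam) i : ℤ) - ((Λ.d e + m) i : ℤ)) =
        fun i => (Λ.d lam i : ℤ) - (m i : ℤ) := by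
      funext i
      rw [hcd]
      simp only [Pi.add_apply]
      push_cast
      ring
    rw [heq]
    exact hm
  obtain ⟨μ', hμ'r, hμ'd, hck⟩ := he (Λ.comp e lam) hcr (Λ.d e + m) hm'
  have hsc : Λ.s (Λ.comp e lam) = Λ.s lam := Λ.s_comp _ _ hcomp
  have hx : (pathAt hrf (Λ.s lam)).range = Λ.s lam := pathAt_range hrf _
  set x := pathAt hrf (Λ.s lam) with hxdef
  have hxc : x.range = Λ.s (Λ.comp e lam) := by rw [hsc]; exact hx
  have hxμ' : x.range = Λ.s μ' := by rw [hxc, hck.1]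
  have hy := extPath_extends (Λ.comp e lam) x hxc
  have hz := extPath_extends μ' x hxμ'
  have hyz := hck.2 x _ _ hxc hy hz
  have hde1 : Λ.d e ≤ Λ.d (Λ.comp e lam) := by
    rw [hcd]; intro i; simp only [Pi.add_apply]; omega
  have hde2 : Λ.d e ≤ Λ.d μ' := by
    rw [hμ'd]; intro i; simp only [Pi.add_apply]; omega
  have hfe : Λ.ffst (Λ.comp e lam) (Λ.d e) hde1 = e :=
    ((Λ.ffst_fsnd_eq hde1 hcomp rfl rfl).1).symm
  have hseg1 : (extPath (Λ.comp e lam) x hxc).seg 0 (Λ.d e) zero_le = e := by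
    calc (extPath (Λ.comp e lam) x hxc).seg 0 (Λ.d e) zero_le
        = Λ.ffst ((extPath (Λ.comp e lam) x hxc).seg 0 (Λ.d (Λ.comp e lam)) zero_le)
            (Λ.d e) ((extPath (Λ.comp e lam) x hxc).le_d_seg hde1) :=
          ((extPath (Λ.comp e lam) x hxc).ffst_seg hde1).symm
      _ = Λ.ffst (Λ.comp e lam) (Λ.d e) hde1 := Λ.ffst_congr hy.1 _
      _ = e := hfe
  have hseg2 : (extPath μ' x hxμ').seg 0 (Λ.d e) zero_le =
      Λ.ffst μ' (Λ.d e) hde2 := by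
    calc (extPath μ' x hxμ').seg 0 (Λ.d e) zero_le
        = Λ.ffst ((extPath μ' x hxμ').seg 0 (Λ.d μ') zero_le)
            (Λ.d e) ((extPath μ' x hxμ').le_d_seg hde2) :=
          ((extPath μ' x hxμ').ffst_seg hde2).symm
      _ = Λ.ffst μ' (Λ.d e) hde2 := Λ.ffst_congr hz.1 _
  have hεe : Λ.ffst μ' (Λ.d e) hde2 = e := by
    rw [← hseg2, ← hyz, hseg1]
  have hcμ : Λ.comp e (Λ.fsnd μ' (Λ.d e) hde2) = μ' := by
    have h0 := Λ.comp_ffst_fsnd μ' (Λ.d e) hde2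
    rwa [hεe] at h0
  have hcompμ : Λ.s e = Λ.r (Λ.fsnd μ' (Λ.d e) hde2) := by
    rw [Λ.r_fsnd, hεe]
  refine ⟨Λ.fsnd μ' (Λ.d e) hde2, ?_, ?_, ?_, ?_⟩
  · rw [Λ.r_fsnd, hεe]
  · rw [Λ.d_fsnd, hμ'd]
    funext i
    simp only [Pi.add_apply, Pi.sub_apply]
    omega
  · rw [Λ.s_fsnd, ← hck.1, hsc]
  · -- path condition for lam ∼ fsnd μ'
    intro x' y' z' hx' hy' hz'
    have hy'r : y'.range = Λ.s e := by rw [hy'.range_eq, hlam]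
    have hz'r : z'.range = Λ.s e := by
      rw [hz'.range_eq, Λ.r_fsnd, hεe]
    have hY : Extends Λ (extPath e y' hy'r) (Λ.comp e lam) x' :=
      extends_comp hcomp hy' (extPath_extends e y' hy'r)
    have hZ0 : Extends Λ (extPath e z' hz'r) (Λ.comp e (Λ.fsnd μ' (Λ.d e) hde2)) x' :=
      extends_comp hcompμ hz' (extPath_extends e z' hz'r)
    have hZ : Extends Λ (extPath e z' hz'r) μ' x' := by rwa [hcμ] at hZ0
    have hx'c : x'.range = Λ.s (Λ.comp e lam) := by rw [hsc]; exact hx'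
    have hYZ := hck.2 x' _ _ hx'c hY hZ
    calc y' = (extPath e y' hy'r).shift (Λ.d e) := ((extPath_extends e y' hy'r).2).symm
      _ = (extPath e z' hz'r).shift (Λ.d e) := by rw [hYZ]
      _ = z' := (extPath_extends e z' hz'r).2

end PGraphStr
namespace PGraphStr

open Classical

variable {k : ℕ} {V E : Type} {Λ : PGraphStr (Fin k → ℕ) V E}

lemma hrel_equiv : Equivalence (fun a b : HE Λ => CKeq Λ a.1 b.1) :=
  ⟨fun _ => CKeq.refl' _, fun h => h.symm', fun h1 h2 => h1.trans' h2⟩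

lemma quot_mk_eq_iff (a b : HE Λ) :
    (Quot.mk (fun a b : HE Λ => CKeq Λ a.1 b.1) a : QuotE Λ) = Quot.mk _ b ↔
      CKeq Λ a.1 b.1 := by
  rw [Quot.eq]
  exact Equivalence.eqvGen_iff hrel_equiv

variable (Λ) in
/-- Representative-level composition in the quotient. -/
noncomputable def compAux (a b : HE Λ) : QuotE Λ :=
  if h : Λ.s a.1 = Λ.r b.1 then
    Quot.mk _ ⟨Λ.comp a.1 b.1, by rw [Λ.r_comp _ _ h]; exact a.2⟩
  else Quot.mk _ b

lemma compAux_pos (a b : HE Λ) (h : Λ.s a.1 = Λ.r b.1) :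
    compAux Λ a b =
      Quot.mk _ ⟨Λ.comp a.1 b.1, by rw [Λ.r_comp _ _ h]; exact a.2⟩ := by
  erw [compAux, dif_pos h]

lemma compAux_neg (a b : HE Λ) (h : ¬ Λ.s a.1 = Λ.r b.1) :
    compAux Λ a b = Quot.mk _ b := by
  erw [compAux, dif_neg h]


/-- Uniqueness engine for factorisations in the quotient. -/
lemma unique_split (hrf : RowFiniteNoSources Λ)
    (hmt : IsMaximalTail Λ (Set.univ : Set V)) (lam : HE Λ) {mp mq : Fin k → ℕ}
    {μ : E} (hμd : Λ.d μ = mp + mq) (hck : CKeq Λ lam.1 μ)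
    (η' ζ' : HE Λ) (hsr : Λ.s η'.1 = Λ.r ζ'.1)
    (hdη' : pdeg Λ (Λ.d η'.1) = pdeg Λ mp) (hdζ' : pdeg Λ (Λ.d ζ'.1) = pdeg Λ mq)
    (hcomp : CKeq Λ (Λ.comp η'.1 ζ'.1) lam.1) :
    CKeq Λ η'.1 (Λ.fpart μ mp mq hμd).1 ∧ CKeq Λ ζ'.1 (Λ.fpart μ mp mq hμd).2 := by
  obtain ⟨η'', hη''r, hη''d, hη''ck⟩ :=
    η'.2 η'.1 rfl mp ((pdeg_eq_iff_mem hrf hmt).mp hdη')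
  obtain ⟨ζ'', hζ''r, hζ''d, hζ''ck⟩ :=
    ζ'.2 ζ'.1 rfl mq ((pdeg_eq_iff_mem hrf hmt).mp hdζ')
  have hsr'' : Λ.s η'' = Λ.r ζ'' := by rw [← hη''ck.1, hsr, hζ''r]
  have hck2 : CKeq Λ (Λ.comp η'' ζ'') (Λ.comp η'.1 ζ'.1) :=
    CKeq.comp_congr hrf hη''ck.symm' hζ''ck.symm' hsr''
  have hck3 : CKeq Λ (Λ.comp η'' ζ'') μ := (hck2.trans' hcomp).trans' hck
  have hdc : Λ.d (Λ.comp η'' ζ'') = Λ.d μ := by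
    rw [Λ.d_comp _ _ hsr'', hη''d, hζ''d, hμd]
  have heq : Λ.comp η'' ζ'' = μ := hck3.eq_of_d_eq hrf hdc
  have hpair := Λ.fpart_eq hμd hsr'' hη''d hζ''d heq
  exact ⟨hpair.1 ▸ hη''ck, hpair.2 ▸ hζ''ck⟩

variable (Λ) in
noncomputable def qstr (hrf : RowFiniteNoSources Λ)
    (hmt : IsMaximalTail Λ (Set.univ : Set V)) :
    PGraphStr (↥(PerMon Λ)) (HV Λ) (QuotE Λ) where
  r := Quot.lift (fun e => (⟨Λ.r e.1, e.2⟩ : HV Λ))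
    (fun _ _ hab => Subtype.ext (hab.r_eq hrf))
  s := Quot.lift (fun e => (⟨Λ.s e.1, hper_hered hrf e.2⟩ : HV Λ))
    (fun _ _ hab => Subtype.ext hab.1)
  d := Quot.lift (fun e => pdeg Λ (Λ.d e.1))
    (fun a b hab => (pdeg_eq_iff_mem hrf hmt).mpr ⟨a.1, b.1, hab, rfl⟩)
  vert v := Quot.mk _ ⟨Λ.vert v.1, by rw [Λ.r_vert]; exact v.2⟩
  comp := Quot.lift₂ (compAux Λ)
    (by
      intro a b1 b2 hb
      by_cases hc : Λ.s a.1 = Λ.r b1.1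
      · have hc2 : Λ.s a.1 = Λ.r b2.1 := by rw [hc, hb.r_eq hrf]
        rw [compAux_pos a b1 hc, compAux_pos a b2 hc2]
        exact Quot.sound (CKeq.comp_congr hrf (CKeq.refl' a.1) hb hc)
      · have hc2 : ¬ Λ.s a.1 = Λ.r b2.1 := by rw [← hb.r_eq hrf]; exact hc
        rw [compAux_neg a b1 hc, compAux_neg a b2 hc2]
        exact Quot.sound hb)
    (by
      intro a1 a2 b ha
      by_cases hc : Λ.s a1.1 = Λ.r b.1
      · have hc2 : Λ.s a2.1 = Λ.r b.1 := by rw [← ha.1]; exact hc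
        rw [compAux_pos a1 b hc, compAux_pos a2 b hc2]
        exact Quot.sound (CKeq.comp_congr hrf ha (CKeq.refl' b.1) hc)
      · have hc2 : ¬ Λ.s a2.1 = Λ.r b.1 := by rw [← ha.1]; exact hc
        rw [compAux_neg a1 b hc, compAux_neg a2 b hc2])
  r_vert v := Subtype.ext (Λ.r_vert v.1)
  s_vert v := Subtype.ext (Λ.s_vert v.1)
  d_vert v := Subtype.ext (by
    show quotHom k (PerQuot Λ) (Λ.d (Λ.vert v.1)) = 0
    rw [Λ.d_vert]
    exact map_zero _)
  r_comp := by
    intro μ ν h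
    induction μ using Quot.ind with | _ a =>
    induction ν using Quot.ind with | _ b =>
    have h' : Λ.s a.1 = Λ.r b.1 := congrArg Subtype.val h
    show Quot.lift _ _ (compAux Λ a b) = _
    rw [compAux_pos a b h']
    exact Subtype.ext (Λ.r_comp _ _ h')
  s_comp := by
    intro μ ν h
    induction μ using Quot.ind with | _ a =>
    induction ν using Quot.ind with | _ b =>
    have h' : Λ.s a.1 = Λ.r b.1 := congrArg Subtype.val h
    show Quot.lift _ _ (compAux Λ a b) = _
    rw [compAux_pos a b h']
    exact Subtype.ext (Λ.s_comp _ _ h')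
  d_comp := by
    intro μ ν h
    induction μ using Quot.ind with | _ a =>
    induction ν using Quot.ind with | _ b =>
    have h' : Λ.s a.1 = Λ.r b.1 := congrArg Subtype.val h
    show Quot.lift _ _ (compAux Λ a b) = _
    rw [compAux_pos a b h']
    refine Subtype.ext ?_
    show quotHom k (PerQuot Λ) (Λ.d (Λ.comp a.1 b.1)) =
      quotHom k (PerQuot Λ) (Λ.d a.1) + quotHom k (PerQuot Λ) (Λ.d b.1)
    rw [Λ.d_comp _ _ h', map_add]
  comp_assoc := by
    intro μ ν ξ h1 h2
    induction μ using Quot.ind with | _ a =>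
    induction ν using Quot.ind with | _ b =>
    induction ξ using Quot.ind with | _ c =>
    have h1' : Λ.s a.1 = Λ.r b.1 := congrArg Subtype.val h1
    have h2' : Λ.s b.1 = Λ.r c.1 := congrArg Subtype.val h2
    show Quot.lift₂ _ _ _ (compAux Λ a b) (Quot.mk _ c) =
      Quot.lift₂ _ _ _ (Quot.mk _ a) (compAux Λ b c)
    rw [compAux_pos a b h1', compAux_pos b c h2']
    show compAux Λ _ _ = compAux Λ _ _
    erw [compAux_pos _ c (by rw [Λ.s_comp _ _ h1']; exact h2'),
      compAux_pos a _ (by rw [Λ.r_comp _ _ h2']; exact h1')]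
    exact congrArg (Quot.mk _) (Subtype.ext (Λ.comp_assoc _ _ _ h1' h2'))
  vert_comp := by
    intro μ
    induction μ using Quot.ind with | _ a =>
    show compAux Λ _ a = _
    erw [compAux_pos _ a (by rw [Λ.s_vert])]
    exact congrArg (Quot.mk _) (Subtype.ext (Λ.vert_comp a.1))
  comp_vert := by
    intro μ
    induction μ using Quot.ind with | _ a =>
    show compAux Λ a _ = _
    erw [compAux_pos a _ (by rw [Λ.r_vert])]
    exact congrArg (Quot.mk _) (Subtype.ext (Λ.comp_vert a.1))
  factor := by
    intro ξ p q hpq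
    induction ξ using Quot.ind with | _ lam =>
    obtain ⟨mp, hmp⟩ := AddMonoidHom.mem_mrange.mp p.2
    obtain ⟨mq, hmq⟩ := AddMonoidHom.mem_mrange.mp q.2
    have hd12 : pdeg Λ (Λ.d lam.1) = pdeg Λ (mp + mq) := by
      refine Subtype.ext ?_
      have hval : quotHom k (PerQuot Λ) (Λ.d lam.1) = p.1 + q.1 :=
        congrArg Subtype.val hpq
      show quotHom k (PerQuot Λ) (Λ.d lam.1) = quotHom k (PerQuot Λ) (mp + mq)
      rw [hval, ← hmp, ← hmq, ← map_add]
    obtain ⟨μ, hμr, hμd, hckμ⟩ :=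
      lam.2 lam.1 rfl (mp + mq) ((pdeg_eq_iff_mem hrf hmt).mp hd12)
    obtain ⟨hsp, hdp1, hdp2, hcp⟩ := Λ.fpart_spec μ mp mq hμd
    have hηr : Λ.r (Λ.fpart μ mp mq hμd).1 = Λ.r μ := by
      conv_rhs => rw [← hcp]
      rw [Λ.r_comp _ _ hsp]
    have hηH : Λ.r (Λ.fpart μ mp mq hμd).1 ∈ HPer Λ := by
      rw [hηr, hμr]; exact lam.2
    have hζH : Λ.r (Λ.fpart μ mp mq hμd).2 ∈ HPer Λ := by
      rw [← hsp]; exact hper_hered hrf hηH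
    refine ⟨(Quot.mk _ ⟨(Λ.fpart μ mp mq hμd).1, hηH⟩,
      Quot.mk _ ⟨(Λ.fpart μ mp mq hμd).2, hζH⟩), ⟨?_, ?_, ?_, ?_⟩, ?_⟩
    · exact Subtype.ext hsp
    · refine Subtype.ext ?_
      show quotHom k (PerQuot Λ) (Λ.d (Λ.fpart μ mp mq hμd).1) = p.1
      rw [hdp1, hmp]
    · refine Subtype.ext ?_
      show quotHom k (PerQuot Λ) (Λ.d (Λ.fpart μ mp mq hμd).2) = q.1
      rw [hdp2, hmq]
    · show compAux Λ _ _ = _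
      erw [compAux_pos _ _ hsp]
      refine Quot.sound ?_
      show CKeq Λ (Λ.comp _ _) lam.1
      rw [hcp]
      exact hckμ.symm'
    · rintro ⟨y, z⟩ hyz
      induction y using Quot.ind with | _ η' =>
      induction z using Quot.ind with | _ ζ' =>
      obtain ⟨hsyz, hdy, hdz, hcyz⟩ := hyz
      have hsr' : Λ.s η'.1 = Λ.r ζ'.1 := congrArg Subtype.val hsyz
      have hdη' : pdeg Λ (Λ.d η'.1) = pdeg Λ mp :=
        hdy.trans (Subtype.ext hmp.symm)
      have hdζ' : pdeg Λ (Λ.d ζ'.1) = pdeg Λ mq :=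
        hdz.trans (Subtype.ext hmq.symm)
      have hcomp' : CKeq Λ (Λ.comp η'.1 ζ'.1) lam.1 := by
        have h0 : compAux Λ η' ζ' = Quot.mk _ lam := hcyz
        rw [compAux_pos η' ζ' hsr'] at h0
        exact (quot_mk_eq_iff _ _).mp h0
      obtain ⟨c1, c2⟩ := unique_split hrf hmt lam hμd hckμ η' ζ' hsr' hdη' hdζ' hcomp'
      refine Prod.ext ?_ ?_
      · exact Quot.sound c1
      · exact Quot.sound c2

section QstrLemmas

variable (hrf : RowFiniteNoSources Λ) (hmt : IsMaximalTail Λ (Set.univ : Set V))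

lemma qstr_r_mk (e : HE Λ) :
    (qstr Λ hrf hmt).r (Quot.mk _ e) = ⟨Λ.r e.1, e.2⟩ := rfl

lemma qstr_s_mk (e : HE Λ) :
    (qstr Λ hrf hmt).s (Quot.mk _ e) = ⟨Λ.s e.1, hper_hered hrf e.2⟩ := rfl

lemma qstr_d_mk (e : HE Λ) :
    (qstr Λ hrf hmt).d (Quot.mk _ e) = pdeg Λ (Λ.d e.1) := rfl

lemma qstr_comp_mk (a b : HE Λ) :
    (qstr Λ hrf hmt).comp (Quot.mk _ a) (Quot.mk _ b) = compAux Λ a b := rfl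

end QstrLemmas

end PGraphStr
namespace PGraphStr

open Classical

variable {k : ℕ} {V E : Type} {Λ : PGraphStr (Fin k → ℕ) V E}

lemma pdeg_zero : pdeg Λ (0 : Fin k → ℕ) = 0 := Subtype.ext (map_zero _)

lemma pdeg_add (a b : Fin k → ℕ) : pdeg Λ (a + b) = pdeg Λ a + pdeg Λ b :=
  Subtype.ext (map_add _ _ _)

set_option maxHeartbeats 2000000 in
variable (Λ) in
/-- The pullback `k`-graph structure on `PullE`. -/
noncomputable def pstr (hrf : RowFiniteNoSources Λ)
    (hmt : IsMaximalTail Λ (Set.univ : Set V)) :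
    PGraphStr (Fin k → ℕ) (HV Λ) (PullE Λ (qstr Λ hrf hmt)) where
  r x := (qstr Λ hrf hmt).r x.1.1
  s x := (qstr Λ hrf hmt).s x.1.1
  d x := x.1.2
  vert v := ⟨((qstr Λ hrf hmt).vert v, 0), by
    rw [(qstr Λ hrf hmt).d_vert]
    exact pdeg_zero.symm⟩
  comp x y :=
    if h : (qstr Λ hrf hmt).s x.1.1 = (qstr Λ hrf hmt).r y.1.1 then
      ⟨((qstr Λ hrf hmt).comp x.1.1 y.1.1, x.1.2 + y.1.2), by
        rw [(qstr Λ hrf hmt).d_comp _ _ h, x.2, y.2]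
        exact (pdeg_add _ _).symm⟩
    else x
  r_vert v := (qstr Λ hrf hmt).r_vert v
  s_vert v := (qstr Λ hrf hmt).s_vert v
  d_vert _ := rfl
  r_comp x y h := by
    erw [dif_pos h]
    exact (qstr Λ hrf hmt).r_comp _ _ h
  s_comp x y h := by
    erw [dif_pos h]
    exact (qstr Λ hrf hmt).s_comp _ _ h
  d_comp x y h := by
    erw [dif_pos h]
  comp_assoc := by
    intro x y z h1 h2
    erw [dif_pos h1, dif_pos h2]
    erw [dif_pos (by rw [(qstr Λ hrf hmt).s_comp _ _ h1]; exact h2),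
      dif_pos (by rw [(qstr Λ hrf hmt).r_comp _ _ h2]; exact h1)]
    refine Subtype.ext (Prod.ext ?_ ?_)
    · exact (qstr Λ hrf hmt).comp_assoc _ _ _ h1 h2
    · exact add_assoc _ _ _
  vert_comp := by
    intro x
    dsimp only
    erw [dif_pos (by exact (qstr Λ hrf hmt).s_vert _)]
    refine Subtype.ext (Prod.ext ?_ ?_)
    · exact (qstr Λ hrf hmt).vert_comp _
    · exact zero_add _
  comp_vert := by
    intro x
    dsimp only
    erw [dif_pos (by exact ((qstr Λ hrf hmt).r_vert _).symm)]
    refine Subtype.ext (Prod.ext ?_ ?_)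
    · exact (qstr Λ hrf hmt).comp_vert _
    · exact add_zero _
  factor := by
    rintro ⟨⟨c, nn⟩, hc⟩ p q hpq
    dsimp only at hpq
    have hpq' : nn = p + q := hpq
    subst hpq'
    induction c using Quot.ind with | _ lam =>
    have hc' : pdeg Λ (Λ.d lam.1) = pdeg Λ (p + q) := hc
    obtain ⟨μ, hμr, hμd, hckμ⟩ :=
      lam.2 lam.1 rfl (p + q) ((pdeg_eq_iff_mem hrf hmt).mp hc')
    obtain ⟨hsp, hdp1, hdp2, hcp⟩ := Λ.fpart_spec μ p q hμd
    have hηr : Λ.r (Λ.fpart μ p q hμd).1 = Λ.r μ := by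
      conv_rhs => rw [← hcp]
      rw [Λ.r_comp _ _ hsp]
    have hηH : Λ.r (Λ.fpart μ p q hμd).1 ∈ HPer Λ := by
      rw [hηr, hμr]; exact lam.2
    have hζH : Λ.r (Λ.fpart μ p q hμd).2 ∈ HPer Λ := by
      rw [← hsp]; exact hper_hered hrf hηH
    have hcond : (qstr Λ hrf hmt).s
        (Quot.mk _ (⟨(Λ.fpart μ p q hμd).1, hηH⟩ : HE Λ)) =
        (qstr Λ hrf hmt).r (Quot.mk _ (⟨(Λ.fpart μ p q hμd).2, hζH⟩ : HE Λ)) := by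
      erw [qstr_s_mk, qstr_r_mk]
      exact Subtype.ext hsp
    refine ⟨(⟨(Quot.mk _ ⟨(Λ.fpart μ p q hμd).1, hηH⟩, p), by
        show pdeg Λ (Λ.d (Λ.fpart μ p q hμd).1) = pdeg Λ p
        rw [hdp1]⟩,
      ⟨(Quot.mk _ ⟨(Λ.fpart μ p q hμd).2, hζH⟩, q), by
        show pdeg Λ (Λ.d (Λ.fpart μ p q hμd).2) = pdeg Λ q
        rw [hdp2]⟩), ⟨?_, rfl, rfl, ?_⟩, ?_⟩
    · dsimp only
      exact hcond
    · dsimp only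
      erw [dif_pos hcond]
      refine Subtype.ext (Prod.ext ?_ rfl)
      show compAux Λ _ _ = _
      erw [compAux_pos ⟨_, hηH⟩ ⟨_, hζH⟩ hsp]
      refine Quot.sound ?_
      show CKeq Λ (Λ.comp _ _) lam.1
      rw [hcp]
      exact hckμ.symm'
    · rintro ⟨⟨⟨c1, n1⟩, h1⟩, ⟨⟨c2, n2⟩, h2⟩⟩ ⟨hs12, hd1, hd2, hc12⟩
      dsimp only at hs12 hd1 hd2 hc12
      induction c1 using Quot.ind with | _ η' =>
      induction c2 using Quot.ind with | _ ζ' =>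
      have hn1 : n1 = p := hd1
      have hn2 : n2 = q := hd2
      have hsr' : Λ.s η'.1 = Λ.r ζ'.1 := by
        rw [qstr_s_mk, qstr_r_mk] at hs12
        exact congrArg Subtype.val hs12
      have hdη' : pdeg Λ (Λ.d η'.1) = pdeg Λ p := by
        have h1' : pdeg Λ (Λ.d η'.1) = pdeg Λ n1 := h1
        rw [h1', hn1]
      have hdζ' : pdeg Λ (Λ.d ζ'.1) = pdeg Λ q := by
        have h2' : pdeg Λ (Λ.d ζ'.1) = pdeg Λ n2 := h2
        rw [h2', hn2]
      have hcond' : (qstr Λ hrf hmt).s (Quot.mk _ η') =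
          (qstr Λ hrf hmt).r (Quot.mk _ ζ') := by
        rw [qstr_s_mk, qstr_r_mk]
        exact Subtype.ext hsr'
      have hcomp' : CKeq Λ (Λ.comp η'.1 ζ'.1) lam.1 := by
        erw [dif_pos hcond'] at hc12
        have hval := congrArg (fun t : PullE Λ (qstr Λ hrf hmt) => t.1.1) hc12
        have h0 : compAux Λ η' ζ' = Quot.mk _ lam := hval
        rw [compAux_pos η' ζ' hsr'] at h0
        exact (quot_mk_eq_iff _ _).mp h0
      obtain ⟨c1', c2'⟩ :=
        unique_split hrf hmt lam hμd hckμ η' ζ' hsr' hdη' hdζ' hcomp'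
      refine Prod.ext ?_ ?_
      · exact Subtype.ext (Prod.ext (Quot.sound c1') hn1)
      · exact Subtype.ext (Prod.ext (Quot.sound c2') hn2)

variable (Λ) in
/-- The isomorphism `λ ↦ ([λ], d(λ))`. -/
noncomputable def Phi (hrf : RowFiniteNoSources Λ)
    (hmt : IsMaximalTail Λ (Set.univ : Set V)) :
    HE Λ → PullE Λ (qstr Λ hrf hmt) :=
  fun e => ⟨(Quot.mk _ e, Λ.d e.1), rfl⟩

lemma phi_inj (hrf : RowFiniteNoSources Λ) (hmt : IsMaximalTail Λ (Set.univ : Set V)) :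
    Function.Injective (Phi Λ hrf hmt) := by
  intro e f h
  have h1 : (Quot.mk _ e : QuotE Λ) = Quot.mk _ f :=
    congrArg (fun x : PullE Λ (qstr Λ hrf hmt) => x.1.1) h
  have h2 : Λ.d e.1 = Λ.d f.1 :=
    congrArg (fun x : PullE Λ (qstr Λ hrf hmt) => x.1.2) h
  have hck := (quot_mk_eq_iff e f).mp h1
  exact Subtype.ext (hck.eq_of_d_eq hrf h2)

lemma phi_surj (hrf : RowFiniteNoSources Λ) (hmt : IsMaximalTail Λ (Set.univ : Set V)) :
    Function.Surjective (Phi Λ hrf hmt) := by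
  rintro ⟨⟨c, nn⟩, hc⟩
  induction c using Quot.ind with | _ lam =>
  have hc' : pdeg Λ (Λ.d lam.1) = pdeg Λ nn := hc
  obtain ⟨μ, hμr, hμd, hckμ⟩ :=
    lam.2 lam.1 rfl nn ((pdeg_eq_iff_mem hrf hmt).mp hc')
  refine ⟨⟨μ, by rw [hμr]; exact lam.2⟩, Subtype.ext (Prod.ext ?_ ?_)⟩
  · exact Quot.sound hckμ.symm'
  · exact hμd

end PGraphStr


/-- Theorem 4.2(4)&(5): the quotient `Γ = (H_Per Λ)/∼`, with degree map
`d̃([λ]) = q(d(λ))`, is a `q(ℕ^k)`-graph, and `λ ↦ ([λ], d(λ))` is an isomorphism of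
`k`-graphs from `H_Per Λ` onto the pullback `q*Γ`. -/
theorem stmt18 (k : ℕ) (V E : Type) [Countable E] (Λ : PGraphStr (Fin k → ℕ) V E)
    (hrf : RowFiniteNoSources Λ) (hmt : IsMaximalTail Λ Set.univ) :
    -- Γ = (H_Per Λ)/∼ is a q(ℕ^k)-graph:
    ∃ str : PGraphStr (↥(PerMon Λ)) (HV Λ) (QuotE Λ),
      -- the degree map of Γ is d̃ = q ∘ d,
      (∀ e : HE Λ, str.d (Quot.mk _ e) = pdeg Λ (Λ.d e.1)) ∧
      -- range, source, composition and identities of Γ are induced from H_Per Λ,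
      (∀ e : HE Λ, str.r (Quot.mk _ e) = ⟨Λ.r e.1, e.2⟩) ∧
      (∀ (e : HE Λ) (hs : Λ.s e.1 ∈ HPer Λ), str.s (Quot.mk _ e) = ⟨Λ.s e.1, hs⟩) ∧
      (∀ (e f : HE Λ) (h : Λ.s e.1 = Λ.r f.1),
        str.comp (Quot.mk _ e) (Quot.mk _ f) =
          Quot.mk _ ⟨Λ.comp e.1 f.1, by rw [Λ.r_comp _ _ h]; exact e.2⟩) ∧
      (∀ (v : HV Λ) (hv : Λ.r (Λ.vert v.1) ∈ HPer Λ),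
        str.vert v = Quot.mk _ ⟨Λ.vert v.1, hv⟩) ∧
      -- the pullback q*Γ is a k-graph:
      ∃ pb : PGraphStr (Fin k → ℕ) (HV Λ) (PullE Λ str),
        (∀ x, pb.r x = str.r x.1.1) ∧
        (∀ x, pb.s x = str.s x.1.1) ∧
        (∀ x, pb.d x = x.1.2) ∧
        (∀ v, (pb.vert v).1 = (str.vert v, 0)) ∧
        (∀ x y : PullE Λ str, str.s x.1.1 = str.r y.1.1 →
          (pb.comp x y).1 = (str.comp x.1.1 y.1.1, x.1.2 + y.1.2)) ∧
        -- λ ↦ ([λ], d(λ)) is an isomorphism of k-graphs from H_Per Λ onto q*Γ: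
        ∃ Φ : HE Λ → PullE Λ str,
          (∀ e : HE Λ, (Φ e).1 = (Quot.mk _ e, Λ.d e.1)) ∧
          Function.Bijective Φ ∧
          (∀ (e f : HE Λ) (h : Λ.s e.1 = Λ.r f.1),
            Φ ⟨Λ.comp e.1 f.1, by rw [Λ.r_comp _ _ h]; exact e.2⟩ =
              pb.comp (Φ e) (Φ f)) ∧
          (∀ (v : HV Λ) (hv : Λ.r (Λ.vert v.1) ∈ HPer Λ),
            Φ ⟨Λ.vert v.1, hv⟩ = pb.vert v) ∧
          (∀ e : HE Λ, ∀ (h : Λ.r e.1 ∈ HPer Λ), pb.r (Φ e) = ⟨Λ.r e.1, h⟩) ∧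
          (∀ e : HE Λ, ∀ (h : Λ.s e.1 ∈ HPer Λ), pb.s (Φ e) = ⟨Λ.s e.1, h⟩) ∧
          (∀ e : HE Λ, pb.d (Φ e) = Λ.d e.1) := by
  classical
  refine ⟨PGraphStr.qstr Λ hrf hmt, fun e => rfl, fun e => rfl, fun e hs => rfl,
    fun e f h => PGraphStr.compAux_pos e f h, fun v hv => rfl,
    PGraphStr.pstr Λ hrf hmt, fun x => rfl, fun x => rfl, fun x => rfl,
    fun v => rfl, ?_, PGraphStr.Phi Λ hrf hmt, fun e => rfl,
    ⟨PGraphStr.phi_inj hrf hmt, PGraphStr.phi_surj hrf hmt⟩, ?_, ?_,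
    fun e h => rfl, fun e h => rfl, fun e => rfl⟩
  · -- pb.comp on composable pairs
    intro x y h
    show (dite _ _ _ : PullE Λ (PGraphStr.qstr Λ hrf hmt)).1 = _
    erw [dif_pos h]
  · -- Φ respects composition
    intro e f h
    have hc : (PGraphStr.qstr Λ hrf hmt).s (PGraphStr.Phi Λ hrf hmt e).1.1 =
        (PGraphStr.qstr Λ hrf hmt).r (PGraphStr.Phi Λ hrf hmt f).1.1 := by
      show (PGraphStr.qstr Λ hrf hmt).s (Quot.mk _ e) =
        (PGraphStr.qstr Λ hrf hmt).r (Quot.mk _ f)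
      rw [PGraphStr.qstr_s_mk, PGraphStr.qstr_r_mk]
      exact Subtype.ext h
    show _ = (dite _ _ _ : PullE Λ (PGraphStr.qstr Λ hrf hmt))
    erw [dif_pos hc]
    refine Subtype.ext (Prod.ext ?_ ?_)
    · show (Quot.mk _ (⟨Λ.comp e.1 f.1, by rw [Λ.r_comp _ _ h]; exact e.2⟩ : HE Λ) :
          QuotE Λ) =
        (PGraphStr.qstr Λ hrf hmt).comp (Quot.mk _ e) (Quot.mk _ f)
      rw [PGraphStr.qstr_comp_mk, PGraphStr.compAux_pos e f h]
    · exact Λ.d_comp e.1 f.1 h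
  · -- Φ respects vertices
    intro v hv
    refine Subtype.ext (Prod.ext ?_ ?_)
    · exact rfl
    · exact Λ.d_vert v.1
end
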